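/- arXiv:1102.4966 — 8 statements merged into one kernel-verified Lean document; each statement's English description precedes it below -/
import Mathlib

section
/- For every complex number u, the Capelli element C_{n+1}(u) := Σ_{σ ∈ S_{n+1}} sgn(σ) · E_{σ(n+1),n+1}(u+n) · E_{σ(n),n}(u+n−1) ⋯ E_{σ(1),1}(u) lies in the center of the universal enveloping algebra U(𝔤𝔩_{n+1}(ℂ)); that is, C_{n+1}(u) commutes with (the canonical image in U(𝔤𝔩_{n+1}(ℂ)) of) every matrix unit E_{ij}, 1 ≤ i,j ≤ n+1. -/
attribute [local instance 100] LieRing.ofAssociativeRing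

/-- The universal enveloping algebra of `𝔤𝔩_{n+1}(ℂ)`. -/
noncomputable abbrev UglC (n : ℕ) : Type :=
  UniversalEnvelopingAlgebra ℂ (Matrix (Fin (n+1)) (Fin (n+1)) ℂ)

/-- The image in `U(𝔤𝔩_{n+1}(ℂ))` of the matrix unit `E i j`. -/
noncomputable def matUnit (n : ℕ) (i j : Fin (n+1)) : UglC n :=
  UniversalEnvelopingAlgebra.ι ℂ (Matrix.single i j 1)

/-- `E_{ij}(u) = E_{ij} + u δ_{ij} 1` in `U(𝔤𝔩_{n+1}(ℂ))`. -/
noncomputable def matUnitU (n : ℕ) (u : ℂ) (i j : Fin (n+1)) : UglC n :=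
  matUnit n i j + if i = j then algebraMap ℂ (UglC n) u else 0

/-- The Capelli element
`C_{n+1}(u) = Σ_{σ ∈ S_{n+1}} sgn(σ) E_{σ(n+1),n+1}(u+n) E_{σ(n),n}(u+n-1) ⋯ E_{σ(1),1}(u)`,
where the `k`-th (1-based) column factor is `E_{σ(k),k}(u+k-1)` and the product is taken in
decreasing order of the column index. -/
noncomputable def Capelli (n : ℕ) (u : ℂ) : UglC n :=
  ∑ σ : Equiv.Perm (Fin (n+1)),
    ((Equiv.Perm.sign σ : ℤ) : ℂ) •
      ((List.finRange (n+1)).reverse.map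
        (fun (k : Fin (n+1)) => matUnitU n (u + (k : ℕ)) (σ k) k)).prod

/-! ### Auxiliary material for the proof -/

namespace CapelliAux

/-! #### Lemmas about ranges and filters -/

theorem filter_range_lt (N c : ℕ) :
    (List.range N).filter (fun m => m < c) = List.range (min c N) := by
  induction N with
  | zero => simp
  | succ N ih =>
    rw [List.range_succ, List.filter_append, ih, List.filter_cons, List.filter_nil]
    by_cases h : N < c
    · have hd : decide (N < c) = true := by simp [h]
      rw [hd]
      simp only [if_pos trivial]
      rw [min_eq_right (by omega : N ≤ c), min_eq_right (by omega : N + 1 ≤ c), ← List.range_succ]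
    · have hd : decide (N < c) = false := by simp [h]
      rw [hd]
      simp only [Bool.false_eq_true, if_neg, List.append_nil]
      rw [min_eq_left (by omega : c ≤ N), min_eq_left (by omega : c ≤ N + 1)]
      simp

theorem filter_range_gt (N c : ℕ) :
    (List.range N).filter (fun m => c < m) = List.range' (c+1) (N - (c+1)) := by
  induction N with
  | zero => simp
  | succ N ih =>
    rw [List.range_succ, List.filter_append, ih, List.filter_cons, List.filter_nil]
    by_cases h : c < N
    · have hd : decide (c < N) = true := by simp [h]
      rw [hd]
      simp only [if_pos trivial]
      have h1 : N + 1 - (c+1) = (N - (c+1)) + 1 := by omega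
      rw [h1, List.range'_concat]
      have h2 : c + 1 + 1 * (N - (c+1)) = N := by omega
      rw [h2]
    · have hd : decide (c < N) = false := by simp [h]
      rw [hd]
      have h1 : N + 1 - (c+1) = 0 := by omega
      have h2 : N - (c+1) = 0 := by omega
      simp [h1, h2]

theorem range_split (N c : ℕ) (h : c < N) :
    List.range N = List.range c ++ c :: List.range' (c+1) (N - (c+1)) := by
  have h0 : List.range' c (N - c) = c :: List.range' (c+1) (N - (c+1)) := by
    have : N - c = (N - (c+1)) + 1 := by omega
    rw [this, List.range'_succ]
  rw [List.range_eq_range', List.range_eq_range']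
  rw [← h0]
  have h1 : List.range' 0 c ++ List.range' (0 + 1 * c) (N - c) = List.range' 0 ((N - c) + c) := by
    rw [Nat.add_comm (N - c) c]; exact List.range'_append (s := 0) (m := c) (n := N - c) (step := 1)
  have h2 : (N - c) + c = N := by omega
  simp only [zero_add, one_mul] at h1
  rw [h1, h2]

variable {n : ℕ}

/-- The descending list of columns strictly above `c`: `[n, n-1, …, c+1]`. -/
def descA (c : Fin (n+1)) : List (Fin (n+1)) :=
  ((List.finRange (n+1)).filter (fun k => c < k)).reverse

/-- The descending list of columns strictly below `c`: `[c-1, …, 1, 0]`. -/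
def descB (c : Fin (n+1)) : List (Fin (n+1)) :=
  ((List.finRange (n+1)).filter (fun k => k < c)).reverse

theorem map_val_filter_gt (c : Fin (n+1)) :
    ((List.finRange (n+1)).filter (fun k => c < k)).map Fin.val
      = List.range' (c.val+1) (n - c.val) := by
  have h1 : ((List.finRange (n+1)).map Fin.val).filter (fun m => c.val < m)
      = ((List.finRange (n+1)).filter ((fun m => decide (c.val < m)) ∘ Fin.val)).map Fin.val :=
    List.filter_map
  rw [List.map_coe_finRange_eq_range, filter_range_gt] at h1
  have h2 : ((fun m => decide (c.val < m)) ∘ Fin.val) = (fun k : Fin (n+1) => decide (c < k)) := by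
    funext k
    exact decide_eq_decide.mpr Fin.lt_def.symm
  rw [h2] at h1
  rw [← h1]
  congr 1
  omega

theorem map_val_filter_lt (c : Fin (n+1)) :
    ((List.finRange (n+1)).filter (fun k => k < c)).map Fin.val = List.range c.val := by
  have h1 : ((List.finRange (n+1)).map Fin.val).filter (fun m => m < c.val)
      = ((List.finRange (n+1)).filter ((fun m => decide (m < c.val)) ∘ Fin.val)).map Fin.val :=
    List.filter_map
  rw [List.map_coe_finRange_eq_range, filter_range_lt] at h1
  have h2 : ((fun m => decide (m < c.val)) ∘ Fin.val) = (fun k : Fin (n+1) => decide (k < c)) := by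
    funext k
    exact decide_eq_decide.mpr Fin.lt_def.symm
  rw [h2] at h1
  rw [← h1]
  congr 1
  omega

theorem L_split (c : Fin (n+1)) :
    (List.finRange (n+1)).reverse = descA c ++ c :: descB c := by
  apply List.map_injective_iff.mpr Fin.val_injective
  rw [List.map_reverse, List.map_coe_finRange_eq_range]
  rw [List.map_append, List.map_cons]
  unfold descA descB
  rw [List.map_reverse, List.map_reverse, map_val_filter_gt, map_val_filter_lt]
  rw [range_split (n+1) c.val c.isLt]
  rw [List.reverse_append, List.reverse_cons]
  have : n + 1 - (c.val + 1) = n - c.val := by omega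
  rw [this]
  simp [List.append_assoc]

theorem mem_descA {c k : Fin (n+1)} : k ∈ descA c ↔ c < k := by
  simp [descA, List.mem_reverse, List.mem_filter, List.mem_finRange]

theorem mem_descB {c k : Fin (n+1)} : k ∈ descB c ↔ k < c := by
  simp [descB, List.mem_reverse, List.mem_filter, List.mem_finRange]

theorem descA_length (c : Fin (n+1)) : (descA c).length = n - c.val := by
  have := congrArg List.length (map_val_filter_gt c)
  rw [List.length_map, List.length_range'] at this
  rw [descA, List.length_reverse, this]

theorem descA_succ {i j : Fin (n+1)} (h : j.val = i.val + 1) : descA i = descA j ++ [j] := by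
  apply List.map_injective_iff.mpr Fin.val_injective
  unfold descA
  rw [List.map_append, List.map_reverse, List.map_reverse, map_val_filter_gt, map_val_filter_gt]
  have h1 : n - i.val = (n - j.val) + 1 := by omega
  rw [h1]
  have h2 : List.range' (i.val+1) ((n - j.val) + 1) = (i.val+1) :: List.range' (i.val + 1 + 1) (n - j.val) := List.range'_succ
  rw [h2, List.reverse_cons]
  have e1 : i.val + 1 = j.val := by omega
  rw [e1]
  simp

theorem descB_pred {i j : Fin (n+1)} (h : i.val = j.val + 1) : descB i = j :: descB j := by
  apply List.map_injective_iff.mpr Fin.val_injective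
  unfold descB
  rw [List.map_cons, List.map_reverse, List.map_reverse, map_val_filter_lt, map_val_filter_lt, h,
    List.range_succ, List.reverse_append]
  simp

/-! #### Basic commutator lemmas in `U(𝔤𝔩_{n+1})` -/

theorem stdBasis_mul (a b c d : Fin (n+1)) :
    (Matrix.single a b (1:ℂ)) * Matrix.single c d 1
      = if b = c then Matrix.single a d 1 else 0 := by
  split_ifs with hh
  · subst hh; simpa using Matrix.single_mul_single_same (c := (1:ℂ)) a b d 1
  · exact Matrix.single_mul_single_of_ne (1:ℂ) a b c hh 1

theorem conj_aux {R : Type*} [Ring R] (x y s t : R) (h1 : y * s = s * y) (h2 : x * t = t * x)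
    (h3 : s * t = t * s) :
    (x + s) * (y + t) - (y + t) * (x + s) = x * y - y * x := by
  rw [add_mul, add_mul, mul_add, mul_add, mul_add, mul_add, h1, h2, h3]
  abel

theorem matUnit_comm (a b c d : Fin (n+1)) :
    matUnit n a b * matUnit n c d - matUnit n c d * matUnit n a b
      = (if b = c then matUnit n a d else 0) - (if d = a then matUnit n c b else 0) := by
  have h := LieHom.map_lie (UniversalEnvelopingAlgebra.ι ℂ)
    (Matrix.single a b (1:ℂ)) (Matrix.single c d 1)
  rw [Ring.lie_def, Ring.lie_def, stdBasis_mul, stdBasis_mul] at h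
  rw [matUnit, matUnit, ← h]
  have hl : ∀ X Y : Matrix (Fin (n+1)) (Fin (n+1)) ℂ,
      UniversalEnvelopingAlgebra.ι ℂ (X - Y)
        = UniversalEnvelopingAlgebra.ι ℂ X - UniversalEnvelopingAlgebra.ι ℂ Y := fun X Y =>
    map_sub (UniversalEnvelopingAlgebra.ι ℂ).toLinearMap X Y
  rw [hl]
  congr 1 <;> split_ifs <;> simp [matUnit]

theorem scalar_comm (z : ℂ) (x : UglC n) :
    x * algebraMap ℂ (UglC n) z = algebraMap ℂ (UglC n) z * x :=
  (Algebra.commutes z x).symm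

theorem ite_scalar_comm (p : Prop) [Decidable p] (z : ℂ) (x : UglC n) :
    x * (if p then algebraMap ℂ (UglC n) z else 0)
      = (if p then algebraMap ℂ (UglC n) z else 0) * x := by
  split_ifs with h
  · exact scalar_comm _ _
  · simp

/-- The shifted generator `E_{ab}(u+b)` (0-indexed column shift). -/
noncomputable def Fu (n : ℕ) (u : ℂ) (a b : Fin (n+1)) : UglC n := matUnitU n (u + (b : ℕ)) a b

theorem Fu_comm (u : ℂ) (a b c d : Fin (n+1)) :
    Fu n u a b * Fu n u c d - Fu n u c d * Fu n u a b
      = (if b = c then matUnit n a d else 0) - (if d = a then matUnit n c b else 0) := by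
  rw [← matUnit_comm]
  show (matUnit n a b + _) * (matUnit n c d + _) - (matUnit n c d + _) * (matUnit n a b + _) = _
  rw [conj_aux _ _ _ _ (ite_scalar_comm _ _ _) (ite_scalar_comm _ _ _)]
  split_ifs with h1 h2
  · exact scalar_comm _ _
  · simp
  · simp
  · simp

theorem e_Fu_comm (u : ℂ) (i j a c : Fin (n+1)) :
    matUnit n i j * Fu n u a c - Fu n u a c * matUnit n i j
      = (if j = a then matUnit n i c else 0) - (if c = i then matUnit n a j else 0) := by
  rw [← matUnit_comm]
  show matUnit n i j * (matUnit n a c + _) - (matUnit n a c + _) * matUnit n i j = _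
  rw [mul_add, add_mul, ite_scalar_comm]
  abel

theorem matUnit_eq_Fu_sub (u : ℂ) (a b : Fin (n+1)) :
    matUnit n a b = Fu n u a b - (if a = b then algebraMap ℂ (UglC n) (u + (b:ℕ)) else 0) := by
  rw [Fu, matUnitU]
  abel

theorem Fu_of_ne (u : ℂ) {a b : Fin (n+1)} (h : a ≠ b) : Fu n u a b = matUnit n a b := by
  rw [Fu, matUnitU, if_neg h, add_zero]

/-! #### Products of shifted generators -/

/-- Commutator of an element with a product, expanded along the product. -/
theorem comm_map_prod {R : Type*} [Ring R] {ι : Type*} (x : R) (g : ι → R) :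
    ∀ l : List ι, x * (l.map g).prod - (l.map g).prod * x
      = ∑ m : Fin l.length, ((l.take m).map g).prod * (x * g (l.get m) - g (l.get m) * x) *
          ((l.drop (m+1)).map g).prod := by
  intro l
  induction l with
  | nil => simp
  | cons a l ih =>
    rw [show (∑ m : Fin (a :: l).length, ((List.take (↑m) (a::l)).map g).prod * (x * g ((a::l).get m) - g ((a::l).get m) * x) * ((List.drop (↑m+1) (a::l)).map g).prod) = ∑ m : Fin (l.length + 1), ((List.take (↑m) (a::l)).map g).prod * (x * g ((a::l).get m) - g ((a::l).get m) * x) * ((List.drop (↑m+1) (a::l)).map g).prod from rfl, Fin.sum_univ_succ]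
    have h0 : (List.map g (List.take (↑(0 : Fin (l.length+1))) (a :: l))).prod *
        (x * g ((a :: l).get (0 : Fin (l.length+1))) - g ((a :: l).get (0 : Fin (l.length+1))) * x) *
        (List.map g (List.drop (↑(0 : Fin (l.length+1)) + 1) (a :: l))).prod
        = (x * g a - g a * x) * (List.map g l).prod := by
      simp
    rw [h0]
    have hs : ∀ m : Fin l.length,
        (List.map g (List.take (↑m.succ) (a :: l))).prod *
          (x * g ((a :: l).get m.succ) - g ((a :: l).get m.succ) * x) *
          (List.map g (List.drop (↑m.succ + 1) (a :: l))).prod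
        = g a * ((List.map g (List.take (↑m) l)).prod * (x * g (l.get m) - g (l.get m) * x) *
            (List.map g (List.drop (↑m + 1) l)).prod) := by
      intro m
      simp only [Fin.val_succ, List.take_succ_cons, List.get_cons_succ, List.drop_succ_cons,
        List.map_cons, List.prod_cons]
      noncomm_ring
    rw [Finset.sum_congr rfl (fun m _ => hs m), ← Finset.mul_sum, ← ih]
    simp only [List.map_cons, List.prod_cons]
    noncomm_ring

/-- The full (descending) product of shifted generators with row function `r`. -/
noncomputable def PRow (n : ℕ) (u : ℂ) (r : Fin (n+1) → Fin (n+1)) : UglC n :=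
  ((List.finRange (n+1)).reverse.map (fun k => Fu n u (r k) k)).prod

/-- The partial product over columns strictly above `c`. -/
noncomputable def PA (n : ℕ) (u : ℂ) (c : Fin (n+1)) (r : Fin (n+1) → Fin (n+1)) : UglC n :=
  ((descA c).map (fun k => Fu n u (r k) k)).prod

/-- The partial product over columns strictly below `c`. -/
noncomputable def PB (n : ℕ) (u : ℂ) (c : Fin (n+1)) (r : Fin (n+1) → Fin (n+1)) : UglC n :=
  ((descB c).map (fun k => Fu n u (r k) k)).prod

/-- The sign of a permutation as a complex number. -/
noncomputable def sgnC (σ : Equiv.Perm (Fin (n+1))) : ℂ := ((Equiv.Perm.sign σ : ℤ) : ℂ)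

theorem coe_map_eq (u : ℂ) (r : Fin (n+1) → Fin (n+1)) (l : List (Fin (n+1))) :
    List.map (fun k : Fin (n+1) => matUnitU n (u + (k : ℕ)) (r k) k) l
      = List.map (fun k => Fu n u (r k) k) l := rfl

theorem capelli_eq (u : ℂ) :
    Capelli n u = ∑ σ : Equiv.Perm (Fin (n+1)), sgnC σ • PRow n u σ := by
  unfold Capelli
  refine Finset.sum_congr rfl fun σ _ => ?_
  rw [coe_map_eq]
  rfl

theorem split_PRow (u : ℂ) (r : Fin (n+1) → Fin (n+1)) (c : Fin (n+1)) :
    PRow n u r = PA n u c r * (Fu n u (r c) c * PB n u c r) := by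
  rw [PRow, L_split c, List.map_append, List.map_cons, List.prod_append, List.prod_cons]
  rfl

theorem take_L (c : Fin (n+1)) :
    ((List.finRange (n+1)).reverse).take (n - c.val) = descA c := by
  rw [L_split c]
  exact List.take_left' (descA_length c)

theorem drop_L (c : Fin (n+1)) :
    ((List.finRange (n+1)).reverse).drop (n - c.val + 1) = descB c := by
  rw [L_split c, show descA c ++ c :: descB c = (descA c ++ [c]) ++ descB c by simp]
  refine List.drop_left' ?_
  rw [List.length_append, descA_length, List.length_singleton]

theorem get_L (c : Fin (n+1)) (m : ℕ) (h : m < (List.finRange (n+1)).reverse.length)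
    (hm : m = n - c.val) :
    ((List.finRange (n+1)).reverse).get ⟨m, h⟩ = c := by
  subst hm
  show ((List.finRange (n+1)).reverse)[n - c.val]'_ = c
  rw [List.getElem_of_eq (L_split c)]
  rw [List.getElem_append_right (by rw [descA_length])]
  simp [descA_length]

theorem comm_PRow (u : ℂ) (x : UglC n) (r : Fin (n+1) → Fin (n+1)) :
    x * PRow n u r - PRow n u r * x
      = ∑ c : Fin (n+1), PA n u c r *
          ((x * Fu n u (r c) c - Fu n u (r c) c * x) * PB n u c r) := by
  have hlen : (List.finRange (n+1)).reverse.length = n + 1 := by simp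
  have h := comm_map_prod x (fun k => Fu n u (r k) k) (List.finRange (n+1)).reverse
  rw [PRow, h]
  refine (Fintype.sum_equiv ((Fin.revPerm (n := n+1)).trans (finCongr hlen.symm))
    _ _ fun c => ?_).symm
  have hval : ((((Fin.revPerm (n := n+1)).trans (finCongr hlen.symm))) c).val = n - c.val := by
    simp [Fin.val_rev]
  have hget : (List.finRange (n+1)).reverse.get
      (((Fin.revPerm (n := n+1)).trans (finCongr hlen.symm)) c) = c := by
    exact get_L c _ _ hval
  rw [hget]
  rw [show ((List.finRange (n+1)).reverse).take
      ((((Fin.revPerm (n := n+1)).trans (finCongr hlen.symm)) c) : ℕ) = descA c by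
    rw [hval]; exact take_L c]
  rw [show ((List.finRange (n+1)).reverse).drop
      (((((Fin.revPerm (n := n+1)).trans (finCongr hlen.symm)) c) : ℕ) + 1) = descB c by
    rw [hval]; exact drop_L c]
  rw [PA, PB, mul_assoc]


/-! #### Congruence and reindexing helpers -/

theorem PA_congr (u : ℂ) (c : Fin (n+1)) {r r' : Fin (n+1) → Fin (n+1)}
    (h : ∀ k, c < k → r k = r' k) : PA n u c r = PA n u c r' := by
  unfold PA
  congr 1
  refine List.map_congr_left fun k hk => ?_
  rw [h k (mem_descA.mp hk)]

theorem PB_congr (u : ℂ) (c : Fin (n+1)) {r r' : Fin (n+1) → Fin (n+1)}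
    (h : ∀ k, k < c → r k = r' k) : PB n u c r = PB n u c r' := by
  unfold PB
  congr 1
  refine List.map_congr_left fun k hk => ?_
  rw [h k (mem_descB.mp hk)]

theorem sgnC_mul (σ τ : Equiv.Perm (Fin (n+1))) : sgnC (σ * τ) = sgnC σ * sgnC τ := by
  unfold sgnC
  rw [map_mul]
  push_cast
  ring

theorem sgnC_swap {i j : Fin (n+1)} (h : i ≠ j) : sgnC (Equiv.swap i j) = -1 := by
  unfold sgnC
  rw [Equiv.Perm.sign_swap h]
  simp

theorem half_eq {M : Type*} [AddCommGroup M] [Module ℂ M] {x y : M}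
    (h : (2:ℂ) • x = (2:ℂ) • y) : x = y := by
  have h2 := congrArg (fun z => ((2:ℂ)⁻¹) • z) h
  simpa [smul_smul] using h2

theorem eq_zero_of_eq_neg {M : Type*} [AddCommGroup M] [Module ℂ M] {x : M}
    (h : x = -x) : x = 0 := by
  refine half_eq (x := x) (y := 0) ?_
  rw [smul_zero, two_smul]
  nth_rewrite 1 [h]
  exact neg_add_cancel x

theorem scal_mid (P Q : UglC n) (p : Prop) [Decidable p] (z : ℂ) :
    P * ((if p then algebraMap ℂ (UglC n) z else 0) * Q) = if p then z • (P * Q) else 0 := by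
  split_ifs with h
  · rw [← Algebra.smul_def, mul_smul_comm]
  · simp

/-! #### The three structural sums -/

/-- The sum in which the factor in the column hit by `j` is replaced by a factor with row `i`. -/
noncomputable def DD (n : ℕ) (u : ℂ) (i j : Fin (n+1)) : UglC n :=
  ∑ σ : Equiv.Perm (Fin (n+1)),
    sgnC σ • (PA n u (σ⁻¹ j) σ * (Fu n u i (σ⁻¹ j) * PB n u (σ⁻¹ j) σ))

/-- The sum in which the factor at column `i` is replaced by the shifted generator with column `j`. -/
noncomputable def TT (n : ℕ) (u : ℂ) (i j : Fin (n+1)) : UglC n :=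
  ∑ σ : Equiv.Perm (Fin (n+1)),
    sgnC σ • (PA n u i σ * (Fu n u (σ i) j * PB n u i σ))

/-- The sum over permutations sending `i` to `j` of the product with column `i` omitted. -/
noncomputable def SS (n : ℕ) (u : ℂ) (i j : Fin (n+1)) : UglC n :=
  ∑ σ : Equiv.Perm (Fin (n+1)),
    if σ i = j then sgnC σ • (PA n u i σ * PB n u i σ) else 0

/-- **Main commutator decomposition.** -/
theorem main_comm (u : ℂ) (i j : Fin (n+1)) :
    matUnit n i j * Capelli n u - Capelli n u * matUnit n i j
      = DD n u i j - TT n u i j + (((j:ℕ):ℂ) - ((i:ℕ):ℂ)) • SS n u i j := by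
  rw [capelli_eq, Finset.mul_sum, Finset.sum_mul, ← Finset.sum_sub_distrib,
    DD, TT, SS, Finset.smul_sum, ← Finset.sum_sub_distrib, ← Finset.sum_add_distrib]
  refine Finset.sum_congr rfl fun σ _ => ?_
  rw [mul_smul_comm, smul_mul_assoc, ← smul_sub, comm_PRow]
  have step1 : ∀ c : Fin (n+1),
      PA n u c σ * ((matUnit n i j * Fu n u (σ c) c - Fu n u (σ c) c * matUnit n i j)
        * PB n u c σ)
      = (if c = σ⁻¹ j then PA n u c σ * (matUnit n i c * PB n u c σ) else 0)
        - (if c = i then PA n u c σ * (matUnit n (σ c) j * PB n u c σ) else 0) := by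
    intro c
    rw [e_Fu_comm, sub_mul, mul_sub]
    congr 1
    · by_cases h : c = σ⁻¹ j
      · rw [if_pos (by rw [h, Equiv.Perm.coe_inv, Equiv.apply_symm_apply] : j = σ c), if_pos h]
      · rw [if_neg (fun hh => h (by rw [hh, Equiv.Perm.coe_inv, Equiv.symm_apply_apply] : c = σ⁻¹ j)), if_neg h]
        simp
    · by_cases h : c = i
      · rw [if_pos h, if_pos h]
      · rw [if_neg h, if_neg h]
        simp
  rw [Finset.sum_congr rfl fun c _ => step1 c, Finset.sum_sub_distrib,
    Finset.sum_ite_eq' Finset.univ (σ⁻¹ j) (fun c => PA n u c σ * (matUnit n i c * PB n u c σ)),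
    Finset.sum_ite_eq' Finset.univ i (fun c => PA n u c σ * (matUnit n (σ c) j * PB n u c σ)),
    if_pos (Finset.mem_univ _), if_pos (Finset.mem_univ _)]
  have hA : PA n u (σ⁻¹ j) σ * (matUnit n i (σ⁻¹ j) * PB n u (σ⁻¹ j) σ)
      = PA n u (σ⁻¹ j) σ * (Fu n u i (σ⁻¹ j) * PB n u (σ⁻¹ j) σ)
        - (if σ i = j then (u + ((i:ℕ):ℂ)) • (PA n u i σ * PB n u i σ) else 0) := by
    rw [matUnit_eq_Fu_sub u i (σ⁻¹ j), sub_mul, mul_sub, scal_mid]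
    congr 1
    by_cases h : σ i = j
    · have hinv : σ⁻¹ j = i := by rw [← h, Equiv.Perm.coe_inv, Equiv.symm_apply_apply]
      rw [hinv, if_pos rfl, if_pos h]
    · have h' : i ≠ σ⁻¹ j := fun hh => h (by rw [hh, Equiv.Perm.coe_inv, Equiv.apply_symm_apply])
      rw [if_neg h', if_neg h]
  have hB : PA n u i σ * (matUnit n (σ i) j * PB n u i σ)
      = PA n u i σ * (Fu n u (σ i) j * PB n u i σ)
        - (if σ i = j then (u + ((j:ℕ):ℂ)) • (PA n u i σ * PB n u i σ) else 0) := by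
    rw [matUnit_eq_Fu_sub u (σ i) j, sub_mul, mul_sub, scal_mid]
  rw [hA, hB]
  by_cases h : σ i = j
  · rw [if_pos h, if_pos h, if_pos h]
    module
  · rw [if_neg h, if_neg h, if_neg h]
    module

/-! #### Evaluation of `DD` and `TT` -/

theorem DD_diag (u : ℂ) (i : Fin (n+1)) : DD n u i i = Capelli n u := by
  rw [DD, capelli_eq]
  refine Finset.sum_congr rfl fun σ _ => ?_
  rw [split_PRow u σ (σ⁻¹ i), Equiv.Perm.coe_inv, Equiv.apply_symm_apply]

theorem TT_diag (u : ℂ) (i : Fin (n+1)) : TT n u i i = Capelli n u := by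
  rw [TT, capelli_eq]
  refine Finset.sum_congr rfl fun σ _ => ?_
  rw [split_PRow u σ i]

theorem DD_offdiag (u : ℂ) {i j : Fin (n+1)} (h : i ≠ j) : DD n u i j = 0 := by
  set f : Fin (n+1) → Fin (n+1) := fun x => if x = j then i else x with hf
  have hstep : ∀ σ : Equiv.Perm (Fin (n+1)),
      PA n u (σ⁻¹ j) σ * (Fu n u i (σ⁻¹ j) * PB n u (σ⁻¹ j) σ) = PRow n u (f ∘ σ) := by
    intro σ
    rw [split_PRow u (f ∘ σ) (σ⁻¹ j)]
    have hA : PA n u (σ⁻¹ j) ⇑σ = PA n u (σ⁻¹ j) (f ∘ ⇑σ) := by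
      refine PA_congr u _ fun k hk => ?_
      have hk' : σ k ≠ j := fun hh => (ne_of_gt hk) (by rw [← hh, Equiv.Perm.coe_inv, Equiv.symm_apply_apply])
      show σ k = f (σ k)
      simp [hf, hk']
    have hm : (f ∘ ⇑σ) (σ⁻¹ j) = i := by
      simp [hf, Equiv.Perm.coe_inv, Equiv.apply_symm_apply]
    have hB : PB n u (σ⁻¹ j) ⇑σ = PB n u (σ⁻¹ j) (f ∘ ⇑σ) := by
      refine PB_congr u _ fun k hk => ?_
      have hk' : σ k ≠ j := fun hh => (ne_of_lt hk) (by rw [← hh, Equiv.Perm.coe_inv, Equiv.symm_apply_apply])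
      show σ k = f (σ k)
      simp [hf, hk']
    rw [← hA, ← hB, hm]
  rw [DD, Finset.sum_congr rfl fun σ _ => by rw [hstep σ]]
  apply eq_zero_of_eq_neg
  have hτ : ∀ x, f ((Equiv.swap i j) x) = f x := by
    intro x
    rcases eq_or_ne x i with hh | hh
    · subst hh
      rw [Equiv.swap_apply_left]
      simp [hf, h]
    · rcases eq_or_ne x j with hh2 | hh2
      · subst hh2
        rw [Equiv.swap_apply_right]
        simp [hf, h]
      · rw [Equiv.swap_apply_of_ne_of_ne hh hh2]
  have h0 : ∑ σ : Equiv.Perm (Fin (n+1)), sgnC (Equiv.swap i j * σ) • PRow n u (f ∘ ⇑(Equiv.swap i j * σ))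
      = ∑ σ : Equiv.Perm (Fin (n+1)), sgnC σ • PRow n u (f ∘ ⇑σ) :=
    Fintype.sum_equiv (Equiv.mulLeft (Equiv.swap i j)) _ _ (fun σ => rfl)
  have h1 : ∀ σ : Equiv.Perm (Fin (n+1)),
      sgnC (Equiv.swap i j * σ) • PRow n u (f ∘ ⇑(Equiv.swap i j * σ))
        = -(sgnC σ • PRow n u (f ∘ ⇑σ)) := by
    intro σ
    have ha : sgnC (Equiv.swap i j * σ) = -sgnC σ := by
      rw [sgnC_mul, sgnC_swap h]
      ring
    have hb : f ∘ ⇑(Equiv.swap i j * σ) = f ∘ ⇑σ := by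
      funext k
      exact hτ (σ k)
    rw [ha, hb, neg_smul]
  calc ∑ σ : Equiv.Perm (Fin (n+1)), sgnC σ • PRow n u (f ∘ ⇑σ)
      = ∑ σ : Equiv.Perm (Fin (n+1)),
          sgnC (Equiv.swap i j * σ) • PRow n u (f ∘ ⇑(Equiv.swap i j * σ)) := h0.symm
    _ = ∑ σ : Equiv.Perm (Fin (n+1)), -(sgnC σ • PRow n u (f ∘ ⇑σ)) :=
        Finset.sum_congr rfl fun σ _ => h1 σ
    _ = -∑ σ : Equiv.Perm (Fin (n+1)), sgnC σ • PRow n u (f ∘ ⇑σ) := Finset.sum_neg_distrib _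

theorem PA_succ (u : ℂ) {i j : Fin (n+1)} (h : j.val = i.val + 1) (r : Fin (n+1) → Fin (n+1)) :
    PA n u i r = PA n u j r * Fu n u (r j) j := by
  rw [PA, PA, descA_succ h, List.map_append, List.prod_append]
  simp

theorem PB_pred (u : ℂ) {i j : Fin (n+1)} (h : i.val = j.val + 1) (r : Fin (n+1) → Fin (n+1)) :
    PB n u i r = Fu n u (r j) j * PB n u j r := by
  rw [PB, PB, descB_pred h, List.map_cons, List.prod_cons]

/-- Reindexing a signed sum over permutations by right multiplication by a swap. -/
theorem sum_mulRight_swap {i j : Fin (n+1)} (h : i ≠ j) (F : Equiv.Perm (Fin (n+1)) → UglC n) :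
    ∑ σ : Equiv.Perm (Fin (n+1)), sgnC σ • F σ
      = -∑ σ : Equiv.Perm (Fin (n+1)), sgnC σ • F (σ * Equiv.swap i j) := by
  have h0 : ∑ σ : Equiv.Perm (Fin (n+1)), sgnC (σ * Equiv.swap i j) • F (σ * Equiv.swap i j)
      = ∑ σ : Equiv.Perm (Fin (n+1)), sgnC σ • F σ :=
    Fintype.sum_equiv (Equiv.mulRight (Equiv.swap i j)) _ _ (fun σ => rfl)
  have h1 : ∀ σ : Equiv.Perm (Fin (n+1)),
      sgnC (σ * Equiv.swap i j) • F (σ * Equiv.swap i j)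
        = -(sgnC σ • F (σ * Equiv.swap i j)) := by
    intro σ
    rw [sgnC_mul, sgnC_swap h, mul_neg_one, neg_smul]
  calc ∑ σ : Equiv.Perm (Fin (n+1)), sgnC σ • F σ
      = ∑ σ : Equiv.Perm (Fin (n+1)), sgnC (σ * Equiv.swap i j) • F (σ * Equiv.swap i j) := h0.symm
    _ = ∑ σ : Equiv.Perm (Fin (n+1)), -(sgnC σ • F (σ * Equiv.swap i j)) :=
        Finset.sum_congr rfl fun σ _ => h1 σ
    _ = -∑ σ : Equiv.Perm (Fin (n+1)), sgnC σ • F (σ * Equiv.swap i j) := Finset.sum_neg_distrib _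
theorem smul_ite_zero (z : ℂ) (p : Prop) [Decidable p] (x : UglC n) :
    (if p then z • x else 0) = z • (if p then x else 0) := by
  split_ifs with h
  · rfl
  · rw [smul_zero]

theorem TT_succ (u : ℂ) {i j : Fin (n+1)} (h : j.val = i.val + 1) :
    TT n u i j = SS n u i j := by
  have hvij : i.val ≠ j.val := by omega
  have hij : i ≠ j := fun hh => hvij (congrArg Fin.val hh)
  have hPA : ∀ σ : Equiv.Perm (Fin (n+1)), PA n u j ⇑(σ * Equiv.swap i j) = PA n u j ⇑σ := by
    intro σ
    refine PA_congr u _ fun k hk => ?_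
    have hki : k ≠ i := ne_of_gt (lt_trans (Fin.lt_def.mpr (by omega)) hk)
    have hkj : k ≠ j := ne_of_gt hk
    rw [Equiv.Perm.mul_apply, Equiv.swap_apply_of_ne_of_ne hki hkj]
  have hPB : ∀ σ : Equiv.Perm (Fin (n+1)), PB n u i ⇑(σ * Equiv.swap i j) = PB n u i ⇑σ := by
    intro σ
    refine PB_congr u _ fun k hk => ?_
    have hki : k ≠ i := ne_of_lt hk
    have hkj : k ≠ j := ne_of_lt (lt_trans hk (Fin.lt_def.mpr (by omega)))
    rw [Equiv.Perm.mul_apply, Equiv.swap_apply_of_ne_of_ne hki hkj]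
  have happi : ∀ σ : Equiv.Perm (Fin (n+1)), (σ * Equiv.swap i j) i = σ j := by
    intro σ
    rw [Equiv.Perm.mul_apply, Equiv.swap_apply_left]
  have happj : ∀ σ : Equiv.Perm (Fin (n+1)), (σ * Equiv.swap i j) j = σ i := by
    intro σ
    rw [Equiv.Perm.mul_apply, Equiv.swap_apply_right]
  have e1 : TT n u i j = ∑ σ : Equiv.Perm (Fin (n+1)),
      sgnC σ • (PA n u j ⇑σ * (Fu n u (σ j) j * (Fu n u (σ i) j * PB n u i ⇑σ))) := by
    rw [TT]
    refine Finset.sum_congr rfl fun σ _ => ?_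
    rw [PA_succ u h, mul_assoc]
  have e2 : TT n u i j = -∑ σ : Equiv.Perm (Fin (n+1)),
      sgnC σ • (PA n u j ⇑σ * (Fu n u (σ i) j * (Fu n u (σ j) j * PB n u i ⇑σ))) := by
    rw [e1, sum_mulRight_swap hij]
    congr 1
    refine Finset.sum_congr rfl fun σ _ => ?_
    rw [hPA, hPB, happi, happj]
  have e3 : (2:ℂ) • TT n u i j = ∑ σ : Equiv.Perm (Fin (n+1)),
      ((if j = σ i then sgnC σ • (PA n u j ⇑σ * (matUnit n (σ j) j * PB n u i ⇑σ)) else 0)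
        - (if j = σ j then sgnC σ • (PA n u j ⇑σ * (matUnit n (σ i) j * PB n u i ⇑σ)) else 0)) := by
    rw [two_smul]
    nth_rewrite 1 [e1]
    nth_rewrite 1 [e2]
    rw [← sub_eq_add_neg, ← Finset.sum_sub_distrib]
    refine Finset.sum_congr rfl fun σ _ => ?_
    rw [← smul_sub, ← mul_sub]
    have hmid : Fu n u (σ j) j * (Fu n u (σ i) j * PB n u i ⇑σ)
        - Fu n u (σ i) j * (Fu n u (σ j) j * PB n u i ⇑σ)
        = ((Fu n u (σ j) j * Fu n u (σ i) j - Fu n u (σ i) j * Fu n u (σ j) j) * PB n u i ⇑σ) := by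
      rw [sub_mul, mul_assoc, mul_assoc]
    rw [hmid, Fu_comm]
    split_ifs <;> simp [mul_sub, sub_mul, smul_sub, mul_assoc]
  have e4 : (∑ σ : Equiv.Perm (Fin (n+1)),
      if j = σ j then sgnC σ • (PA n u j ⇑σ * (matUnit n (σ i) j * PB n u i ⇑σ)) else 0)
      = -∑ σ : Equiv.Perm (Fin (n+1)),
          if j = σ i then sgnC σ • (PA n u j ⇑σ * (matUnit n (σ j) j * PB n u i ⇑σ)) else 0 := by
    have hform : ∀ σ : Equiv.Perm (Fin (n+1)),
        (if j = σ j then sgnC σ • (PA n u j ⇑σ * (matUnit n (σ i) j * PB n u i ⇑σ)) else 0)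
          = sgnC σ • (if j = σ j then PA n u j ⇑σ * (matUnit n (σ i) j * PB n u i ⇑σ) else 0) :=
      fun σ => smul_ite_zero _ _ _
    rw [Finset.sum_congr rfl fun σ _ => hform σ,
      sum_mulRight_swap hij
        (fun σ => if j = σ j then PA n u j ⇑σ * (matUnit n (σ i) j * PB n u i ⇑σ) else 0)]
    congr 1
    refine Finset.sum_congr rfl fun σ _ => ?_
    rw [happj, happi, hPA, hPB, smul_ite_zero]
  have e5 : (2:ℂ) • TT n u i j = (2:ℂ) • ∑ σ : Equiv.Perm (Fin (n+1)),
      (if j = σ i then sgnC σ • (PA n u j ⇑σ * (matUnit n (σ j) j * PB n u i ⇑σ)) else 0) := by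
    rw [e3, Finset.sum_sub_distrib, e4, sub_neg_eq_add, two_smul]
  have e6 : TT n u i j = ∑ σ : Equiv.Perm (Fin (n+1)),
      (if j = σ i then sgnC σ • (PA n u j ⇑σ * (matUnit n (σ j) j * PB n u i ⇑σ)) else 0) :=
    half_eq e5
  rw [e6, SS]
  refine Finset.sum_congr rfl fun σ _ => ?_
  by_cases h1 : σ i = j
  · rw [if_pos h1.symm, if_pos h1]
    have h2 : σ j ≠ j := fun hh => hij (σ.injective (h1.trans hh.symm))
    rw [← Fu_of_ne u h2, ← mul_assoc, ← PA_succ u h]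
  · rw [if_neg (fun hh => h1 hh.symm), if_neg h1]

theorem TT_pred (u : ℂ) {i j : Fin (n+1)} (h : i.val = j.val + 1) :
    TT n u i j = - SS n u i j := by
  have hvij : i.val ≠ j.val := by omega
  have hij : i ≠ j := fun hh => hvij (congrArg Fin.val hh)
  have hPA : ∀ σ : Equiv.Perm (Fin (n+1)), PA n u i ⇑(σ * Equiv.swap i j) = PA n u i ⇑σ := by
    intro σ
    refine PA_congr u _ fun k hk => ?_
    have hki : k ≠ i := ne_of_gt hk
    have hkj : k ≠ j := ne_of_gt (lt_trans (Fin.lt_def.mpr (by omega)) hk)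
    rw [Equiv.Perm.mul_apply, Equiv.swap_apply_of_ne_of_ne hki hkj]
  have hPB : ∀ σ : Equiv.Perm (Fin (n+1)), PB n u j ⇑(σ * Equiv.swap i j) = PB n u j ⇑σ := by
    intro σ
    refine PB_congr u _ fun k hk => ?_
    have hkj : k ≠ j := ne_of_lt hk
    have hki : k ≠ i := ne_of_lt (lt_trans hk (Fin.lt_def.mpr (by omega)))
    rw [Equiv.Perm.mul_apply, Equiv.swap_apply_of_ne_of_ne hki hkj]
  have happi : ∀ σ : Equiv.Perm (Fin (n+1)), (σ * Equiv.swap i j) i = σ j := by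
    intro σ
    rw [Equiv.Perm.mul_apply, Equiv.swap_apply_left]
  have happj : ∀ σ : Equiv.Perm (Fin (n+1)), (σ * Equiv.swap i j) j = σ i := by
    intro σ
    rw [Equiv.Perm.mul_apply, Equiv.swap_apply_right]
  have e1 : TT n u i j = ∑ σ : Equiv.Perm (Fin (n+1)),
      sgnC σ • (PA n u i ⇑σ * (Fu n u (σ i) j * (Fu n u (σ j) j * PB n u j ⇑σ))) := by
    rw [TT]
    refine Finset.sum_congr rfl fun σ _ => ?_
    rw [PB_pred u h]
  have e2 : TT n u i j = -∑ σ : Equiv.Perm (Fin (n+1)),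
      sgnC σ • (PA n u i ⇑σ * (Fu n u (σ j) j * (Fu n u (σ i) j * PB n u j ⇑σ))) := by
    rw [e1, sum_mulRight_swap hij]
    congr 1
    refine Finset.sum_congr rfl fun σ _ => ?_
    rw [hPA, hPB, happi, happj]
  have e3 : (2:ℂ) • TT n u i j = ∑ σ : Equiv.Perm (Fin (n+1)),
      ((if j = σ j then sgnC σ • (PA n u i ⇑σ * (matUnit n (σ i) j * PB n u j ⇑σ)) else 0)
        - (if j = σ i then sgnC σ • (PA n u i ⇑σ * (matUnit n (σ j) j * PB n u j ⇑σ)) else 0)) := by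
    rw [two_smul]
    nth_rewrite 1 [e1]
    nth_rewrite 1 [e2]
    rw [← sub_eq_add_neg, ← Finset.sum_sub_distrib]
    refine Finset.sum_congr rfl fun σ _ => ?_
    rw [← smul_sub, ← mul_sub]
    have hmid : Fu n u (σ i) j * (Fu n u (σ j) j * PB n u j ⇑σ)
        - Fu n u (σ j) j * (Fu n u (σ i) j * PB n u j ⇑σ)
        = ((Fu n u (σ i) j * Fu n u (σ j) j - Fu n u (σ j) j * Fu n u (σ i) j) * PB n u j ⇑σ) := by
      rw [sub_mul, mul_assoc, mul_assoc]
    rw [hmid, Fu_comm]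
    split_ifs <;> simp [mul_sub, sub_mul, smul_sub, mul_assoc]
  have e4 : (∑ σ : Equiv.Perm (Fin (n+1)),
      if j = σ j then sgnC σ • (PA n u i ⇑σ * (matUnit n (σ i) j * PB n u j ⇑σ)) else 0)
      = -∑ σ : Equiv.Perm (Fin (n+1)),
          if j = σ i then sgnC σ • (PA n u i ⇑σ * (matUnit n (σ j) j * PB n u j ⇑σ)) else 0 := by
    have hform : ∀ σ : Equiv.Perm (Fin (n+1)),
        (if j = σ j then sgnC σ • (PA n u i ⇑σ * (matUnit n (σ i) j * PB n u j ⇑σ)) else 0)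
          = sgnC σ • (if j = σ j then PA n u i ⇑σ * (matUnit n (σ i) j * PB n u j ⇑σ) else 0) :=
      fun σ => smul_ite_zero _ _ _
    rw [Finset.sum_congr rfl fun σ _ => hform σ,
      sum_mulRight_swap hij
        (fun σ => if j = σ j then PA n u i ⇑σ * (matUnit n (σ i) j * PB n u j ⇑σ) else 0)]
    congr 1
    refine Finset.sum_congr rfl fun σ _ => ?_
    rw [happj, happi, hPA, hPB, smul_ite_zero]
  have e5 : (2:ℂ) • TT n u i j = (2:ℂ) • -∑ σ : Equiv.Perm (Fin (n+1)),
      (if j = σ i then sgnC σ • (PA n u i ⇑σ * (matUnit n (σ j) j * PB n u j ⇑σ)) else 0) := by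
    rw [e3, Finset.sum_sub_distrib, e4]
    module
  have e6 : TT n u i j = -∑ σ : Equiv.Perm (Fin (n+1)),
      (if j = σ i then sgnC σ • (PA n u i ⇑σ * (matUnit n (σ j) j * PB n u j ⇑σ)) else 0) :=
    half_eq e5
  rw [e6, SS]
  congr 1
  refine Finset.sum_congr rfl fun σ _ => ?_
  by_cases h1 : σ i = j
  · rw [if_pos h1.symm, if_pos h1]
    have h2 : σ j ≠ j := fun hh => hij (σ.injective (h1.trans hh.symm))
    rw [← Fu_of_ne u h2, ← PB_pred u h]
  · rw [if_neg (fun hh => h1 hh.symm), if_neg h1]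

theorem comm_of_comm {R : Type*} [Ring R] {x y C : R} (hx : x * C - C * x = 0)
    (hy : y * C - C * y = 0) : (x * y - y * x) * C - C * (x * y - y * x) = 0 := by
  have hx' : x * C = C * x := sub_eq_zero.mp hx
  have hy' : y * C = C * y := sub_eq_zero.mp hy
  have h1 : x * y * C = C * (x * y) := by
    rw [mul_assoc, hy', ← mul_assoc, hx', mul_assoc]
  have h2 : y * x * C = C * (y * x) := by
    rw [mul_assoc, hx', ← mul_assoc, hy', mul_assoc]
  rw [sub_mul, mul_sub, h1, h2, sub_self]

end CapelliAux

/-- For every `u ∈ ℂ`, the Capelli element `C_{n+1}(u)` lies in the center of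
`U(𝔤𝔩_{n+1}(ℂ))`: it commutes with the canonical image of every matrix unit `E_{ij}`. -/
theorem capelli_central (n : ℕ) (u : ℂ) (i j : Fin (n+1)) :
    Capelli n u * matUnit n i j = matUnit n i j * Capelli n u := by
  open CapelliAux in
  have KEY : ∀ d : ℕ, ∀ i j : Fin (n+1), Nat.dist i.val j.val = d →
      matUnit n i j * Capelli n u - Capelli n u * matUnit n i j = 0 := by
    intro d
    induction d using Nat.strong_induction_on with
    | _ d IH =>
      intro i j hd
      rcases Nat.lt_or_ge d 2 with hlow | hhigh
      · rcases Nat.lt_or_ge d 1 with h0 | h1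
        · -- d = 0, so i = j
          have hij : i = j := by
            apply Fin.ext
            simp [Nat.dist] at hd
            omega
          subst hij
          rw [main_comm, DD_diag, TT_diag]
          simp
        · -- d = 1
          have hd1 : i.val = j.val + 1 ∨ j.val = i.val + 1 := by
            simp [Nat.dist] at hd
            omega
          have hij : i ≠ j := by
            intro hh
            have : i.val = j.val := congrArg Fin.val hh
            omega
          rcases hd1 with hs | hs
          · -- i = j + 1 : use TT_pred
            have hsc : ((j:ℕ):ℂ) - ((i:ℕ):ℂ) = -1 := by
              rw [hs]
              push_cast
              ring
            rw [main_comm, DD_offdiag u hij, TT_pred u hs, hsc]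
            module
          · -- j = i + 1 : use TT_succ
            have hsc : ((j:ℕ):ℂ) - ((i:ℕ):ℂ) = 1 := by
              rw [hs]
              push_cast
              ring
            rw [main_comm, DD_offdiag u hij, TT_succ u hs, hsc]
            module
      · -- d ≥ 2 : reduce to closer pairs via a bracket
        have hne : i.val ≠ j.val := by
          simp [Nat.dist] at hd
          omega
        have hji : j ≠ i := by
          intro hh
          exact hne (congrArg Fin.val hh).symm
        rcases Nat.lt_or_ge i.val j.val with hlt | hge
        · set k : Fin (n+1) := ⟨j.val - 1, by omega⟩ with hk
          have hk1 : Nat.dist i.val k.val = d - 1 := by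
            simp only [Nat.dist, hk] at hd ⊢
            omega
          have hk2 : Nat.dist k.val j.val = 1 := by
            simp only [Nat.dist, hk] at hd ⊢
            omega
          have h1 := IH (d-1) (by omega) i k hk1
          have h2 := IH 1 (by omega) k j hk2
          have hbr : matUnit n i j = matUnit n i k * matUnit n k j
              - matUnit n k j * matUnit n i k := by
            rw [matUnit_comm, if_pos rfl, if_neg hji, sub_zero]
          rw [hbr]
          exact comm_of_comm h1 h2
        · set k : Fin (n+1) := ⟨j.val + 1, by omega⟩ with hk
          have hk1 : Nat.dist i.val k.val = d - 1 := by
            simp only [Nat.dist, hk] at hd ⊢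
            omega
          have hk2 : Nat.dist k.val j.val = 1 := by
            simp only [Nat.dist, hk] at hd ⊢
            omega
          have h1 := IH (d-1) (by omega) i k hk1
          have h2 := IH 1 (by omega) k j hk2
          have hbr : matUnit n i j = matUnit n i k * matUnit n k j
              - matUnit n k j * matUnit n i k := by
            rw [matUnit_comm, if_pos rfl, if_neg hji, sub_zero]
          rw [hbr]
          exact comm_of_comm h1 h2
  exact (sub_eq_zero.mp (KEY (Nat.dist i.val j.val) i j rfl)).symm
end

section
/- For every complex number u, the element C_{n+1}(u) − Π_{p=1}^{n+1} (E_{pp} + u + p − 1) of U(𝔤𝔩_{n+1}(ℂ)) lies in the left ideal of U(𝔤𝔩_{n+1}(ℂ)) generated by the strictly lower triangular matrix units {E_{ij} : 1 ≤ j < i ≤ n+1}. (Here the product Π_{p=1}^{n+1}(E_{pp}+u+p−1) is taken in U(𝔤𝔩_{n+1}(ℂ)); its factors commute.) -/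
attribute [instance] LieRing.ofAssociativeRing

lemma commute_matUnit_aux (n : ℕ) (i k j : Fin (n+1)) (hkj : k ≠ j) (hij : i ≠ j) :
    Commute (matUnit n i k) (matUnit n j j) := by
  have hbr : ⁅Matrix.single i k (1:ℂ), Matrix.single j j (1:ℂ)⁆ = 0 := by
    rw [Ring.lie_def]
    rw [Matrix.single_mul_single_of_ne (h := hkj), Matrix.single_mul_single_of_ne (h := hij.symm),
      sub_zero]
  have h := (UniversalEnvelopingAlgebra.ι ℂ
      (L := Matrix (Fin (n+1)) (Fin (n+1)) ℂ)).map_lie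
      (Matrix.single i k (1:ℂ)) (Matrix.single j j (1:ℂ))
  rw [hbr, map_zero, Ring.lie_def] at h
  unfold Commute SemiconjBy
  rw [← sub_eq_zero]
  exact h.symm

lemma commute_matUnitU (n : ℕ) (i k j : Fin (n+1)) (hik : i ≠ k) (hkj : k ≠ j) (hij : i ≠ j)
    (v w : ℂ) : Commute (matUnitU n v i k) (matUnitU n w j j) := by
  rw [matUnitU, matUnitU, if_neg hik, if_pos rfl, add_zero]
  exact (commute_matUnit_aux n i k j hkj hij).add_right
    (Algebra.commute_algebraMap_right w (matUnit n i k))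

lemma mem_take_finRange (n m : ℕ) (j : Fin (n+1)) (hj : j ∈ (List.finRange (n+1)).take m) :
    (j : ℕ) < m := by
  obtain ⟨i, hi, hij⟩ := List.mem_iff_getElem.mp hj
  rw [List.getElem_take] at hij
  rw [List.length_take] at hi
  have hji : (j : ℕ) = i := by rw [← hij]; simp
  rw [hji]
  exact lt_of_lt_of_le hi (min_le_left _ _)

lemma conv2 (n : ℕ) (u : ℂ) (σ : Equiv.Perm (Fin (n+1))) (l : List (Fin (n+1))) :
    List.map (fun k : ℕ => matUnitU n (u + (k : ℂ)) (σ (Fin.ofNat (n+1) k)) ((Fin.ofNat (n+1) k)))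
        (l >>= fun a => pure a.val)
      = List.map (fun k : Fin (n+1) => matUnitU n (u + ((k : ℕ) : ℂ)) (σ k) k) l := by
  have hb : (l >>= fun a => pure a.val) = l.map Fin.val := by
    induction l with
    | nil => rfl
    | cons a l ih =>
      show (a :: l).flatMap (fun a => [a.val]) = _
      rw [List.flatMap_cons]
      show _ :: l.flatMap (fun a => [a.val]) = _
      rw [show l.flatMap (fun a => [a.val]) = (l >>= fun a => pure a.val) from rfl, ih]
      rfl
  rw [hb, List.map_map]
  apply List.map_congr_left
  intro a _
  simp [Function.comp, Fin.cast_val_eq_self]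

lemma conv_diag (n : ℕ) (u : ℂ) (l : List (Fin (n+1))) :
    List.map (fun p : ℕ => matUnitU n (u + (p : ℂ)) ((Fin.ofNat (n+1) p)) ((Fin.ofNat (n+1) p)))
        (l >>= fun a => pure a.val)
      = List.map (fun p : Fin (n+1) => matUnitU n (u + ((p : ℕ) : ℂ)) p p) l := by
  have hb : (l >>= fun a => pure a.val) = l.map Fin.val := by
    induction l with
    | nil => rfl
    | cons a l ih =>
      show (a :: l).flatMap (fun a => [a.val]) = _
      rw [List.flatMap_cons]
      show _ :: l.flatMap (fun a => [a.val]) = _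
      rw [show l.flatMap (fun a => [a.val]) = (l >>= fun a => pure a.val) from rfl, ih]
      rfl
  rw [hb, List.map_map]
  apply List.map_congr_left
  intro a _
  simp [Function.comp, Fin.cast_val_eq_self]

lemma term_mem (n : ℕ) (u : ℂ) (σ : Equiv.Perm (Fin (n+1))) (hσ : σ ≠ 1) :
    ((List.finRange (n+1)).reverse.map
        (fun k : Fin (n+1) => matUnitU n (u + ((k : ℕ) : ℂ)) (σ k) k)).prod
    ∈ Submodule.span (UglC n)
        {x : UglC n | ∃ i j : Fin (n+1), j < i ∧ x = matUnit n i j} := by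
  classical
  set f : Fin (n+1) → UglC n := fun k => matUnitU n (u + ((k : ℕ) : ℂ)) (σ k) k with hf
  -- minimal non-fixed point
  have hne : (Finset.univ.filter (fun k => σ k ≠ k)).Nonempty := by
    by_contra h
    rw [Finset.not_nonempty_iff_eq_empty, Finset.filter_eq_empty_iff] at h
    exact hσ (Equiv.ext fun k => by simpa using not_not.mp (h (Finset.mem_univ k)))
  set k₀ := (Finset.univ.filter (fun k => σ k ≠ k)).min' hne with hk₀def
  have hk₀ : σ k₀ ≠ k₀ := by
    have := Finset.min'_mem _ hne
    rw [Finset.mem_filter] at this; exact this.2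
  have hmin : ∀ j : Fin (n+1), j < k₀ → σ j = j := by
    intro j hj
    by_contra h
    exact absurd (Finset.min'_le _ j (Finset.mem_filter.mpr ⟨Finset.mem_univ j, h⟩))
      (not_le.mpr hj)
  have hgt : k₀ < σ k₀ := by
    rcases lt_or_gt_of_ne hk₀.symm with h | h
    · exact h
    · exact absurd (σ.injective (hmin (σ k₀) h)) hk₀
  -- split the list
  set L := List.finRange (n+1) with hL
  have hget : L[(k₀ : ℕ)]? = some k₀ := by
    rw [List.getElem?_eq_getElem (by simp [hL, k₀.isLt])]
    simp [hL, List.getElem_finRange]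
  have hsplit : L = L.take (k₀ : ℕ) ++ [k₀] ++ L.drop ((k₀ : ℕ)+1) := by
    conv_lhs => rw [← List.take_append_drop ((k₀ : ℕ)+1) L]
    rw [List.take_succ, hget]
    rfl
  rw [hsplit]
  simp only [List.reverse_append, List.reverse_singleton, List.map_append, List.prod_append,
    List.singleton_append, List.map_cons, List.prod_cons, List.append_assoc]
  set Q := ((L.take (k₀ : ℕ)).reverse.map f).prod with hQ
  have hcomm : Commute (f k₀) Q := by
    apply Commute.list_prod_right
    intro x hx
    rw [List.mem_map] at hx
    obtain ⟨j, hj, rfl⟩ := hx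
    rw [List.mem_reverse] at hj
    have hjlt : j < k₀ := by
      have := mem_take_finRange n _ j hj
      exact Fin.lt_def.mpr this
    have hfix : σ j = j := hmin j hjlt
    have : f j = matUnitU n (u + (j : ℕ)) j j := by rw [hf]; simp [hfix]
    rw [this, hf]
    exact commute_matUnitU n (σ k₀) k₀ j hk₀ hjlt.ne' (ne_of_gt (lt_trans hjlt hgt)) _ _
  rw [List.reverse_cons, List.map_append, List.prod_append, List.map_singleton,
    List.prod_singleton, mul_assoc, hcomm.eq, ← mul_assoc]
  have hfk : f k₀ = matUnit n (σ k₀) k₀ := by rw [hf]; simp [matUnitU, hk₀]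
  rw [hfk]
  have hmem : matUnit n (σ k₀) k₀ ∈
      {x : UglC n | ∃ i j : Fin (n+1), j < i ∧ x = matUnit n i j} :=
    ⟨σ k₀, k₀, hgt, rfl⟩
  have := Submodule.smul_mem (Submodule.span (UglC n)
    {x : UglC n | ∃ i j : Fin (n+1), j < i ∧ x = matUnit n i j})
    (((L.drop ((k₀ : ℕ)+1)).reverse.map f).prod * Q) (Submodule.subset_span hmem)
  simpa [smul_eq_mul, mul_assoc] using this


/-- For every `u ∈ ℂ`, the element
`C_{n+1}(u) − Π_{p=1}^{n+1} (E_{pp} + u + p − 1)` lies in the left ideal of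
`U(𝔤𝔩_{n+1}(ℂ))` generated by the strictly lower triangular matrix units
`E_{ij}`, `1 ≤ j < i ≤ n+1`.  (The left ideal is the `U(𝔤𝔩_{n+1}(ℂ))`-submodule of
`U(𝔤𝔩_{n+1}(ℂ))` spanned by these elements; the diagonal product, taken here in decreasing
order of `p`, has pairwise commuting factors.) -/
theorem capelli_sub_diagonal_mem_lowerIdeal (n : ℕ) (u : ℂ) :
    Capelli n u -
      ((List.finRange (n+1)).reverse.map (fun (p : Fin (n+1)) => matUnitU n (u + (p : ℕ)) p p)).prod
    ∈ Submodule.span (UglC n)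
        {x : UglC n | ∃ i j : Fin (n+1), j < i ∧ x = matUnit n i j} := by
  classical
  have hc : ∀ σ : Equiv.Perm (Fin (n+1)),
      ((List.finRange (n+1)).reverse.map
        (fun (k : Fin (n+1)) => matUnitU n (u + (k : ℕ)) (σ k) k)).prod
      = ((List.finRange (n+1)).reverse.map
        (fun k : Fin (n+1) => matUnitU n (u + ((k : ℕ) : ℂ)) (σ k) k)).prod := by
    intro σ; rfl
  have hd : ((List.finRange (n+1)).reverse.map
        (fun (p : Fin (n+1)) => matUnitU n (u + (p : ℕ)) p p)).prod
      = ((List.finRange (n+1)).reverse.map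
        (fun p : Fin (n+1) => matUnitU n (u + ((p : ℕ) : ℂ)) p p)).prod := by
    rfl
  rw [Capelli, hd]
  rw [← Finset.add_sum_erase _ _ (Finset.mem_univ (1 : Equiv.Perm (Fin (n+1))))]
  have h1 : ((Equiv.Perm.sign (1 : Equiv.Perm (Fin (n+1))) : ℤ) : ℂ) •
      ((List.finRange (n+1)).reverse.map
        (fun k : Fin (n+1) => matUnitU n (u + ((k : ℕ) : ℂ)) ((1 : Equiv.Perm (Fin (n+1))) k) k)).prod
      = ((List.finRange (n+1)).reverse.map
        (fun p : Fin (n+1) => matUnitU n (u + ((p : ℕ) : ℂ)) p p)).prod := by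
    simp [Equiv.Perm.one_apply]
  rw [h1, add_sub_cancel_left]
  apply Submodule.sum_mem
  intro σ hσ
  have hσ1 : σ ≠ 1 := Finset.ne_of_mem_erase hσ
  rw [Algebra.smul_def]
  exact Submodule.smul_mem _ _ (term_mem n u σ hσ1)
end

section
/- In the algebra A := Λ ⊗_ℂ U(𝔤𝔩_{n+1}(ℂ)), for all i, j ∈ {1,…,n+1} and all u ∈ ℂ one has η_i(u+1)·η_j(u) + η_j(u+1)·η_i(u) = 0 and η_i'(u)·η_j'(u+1) + η_j'(u)·η_i'(u+1) = 0. -/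
set_option maxHeartbeats 1000000
set_option synthInstance.maxHeartbeats 200000


open scoped TensorProduct

attribute [local instance] LieRing.ofAssociativeRing

/-- The exterior algebra `Λ(ℂ^{2(n+1)})`, with basis vectors indexed by
`Fin (n+1) ⊕ Fin (n+1)` (the left copy giving the `e_i` and the right copy the `e_i'`). -/
noncomputable abbrev ExtC (n : ℕ) : Type :=
  ExteriorAlgebra ℂ ((Fin (n+1) ⊕ Fin (n+1)) → ℂ)

/-- The algebra `A = Λ(ℂ^{2(n+1)}) ⊗_ℂ U(𝔤𝔩_{n+1}(ℂ))`. -/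
noncomputable abbrev AlgA (n : ℕ) : Type := ExtC n ⊗[ℂ] UglC n

/-- `e_i ∈ A`. -/
noncomputable def eL (n : ℕ) (i : Fin (n+1)) : AlgA n :=
  (ExteriorAlgebra.ι ℂ (Pi.single (Sum.inl i) (1:ℂ))) ⊗ₜ[ℂ] 1

/-- `e_i' ∈ A`. -/
noncomputable def eR (n : ℕ) (i : Fin (n+1)) : AlgA n :=
  (ExteriorAlgebra.ι ℂ (Pi.single (Sum.inr i) (1:ℂ))) ⊗ₜ[ℂ] 1

/-- The image of the matrix unit `E_{ij}` in `A`. -/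
noncomputable def EU (n : ℕ) (i j : Fin (n+1)) : AlgA n :=
  1 ⊗ₜ[ℂ] (UniversalEnvelopingAlgebra.ι ℂ (Matrix.single i j 1))

/-- `E_{ij}(u) = E_{ij} + u δ_{ij} 1`, viewed inside `A`. -/
noncomputable def EUu (n : ℕ) (u : ℂ) (i j : Fin (n+1)) : AlgA n :=
  EU n i j + if i = j then algebraMap ℂ (AlgA n) u else 0

/-- `η_j(u) = Σ_p e_p E_{pj}(u)`. -/
noncomputable def etaL (n : ℕ) (u : ℂ) (j : Fin (n+1)) : AlgA n :=
  ∑ p : Fin (n+1), eL n p * EUu n u p j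

/-- `η_i'(u) = Σ_q e_q' E_{iq}(u)`. -/
noncomputable def etaR (n : ℕ) (u : ℂ) (i : Fin (n+1)) : AlgA n :=
  ∑ q : Fin (n+1), eR n q * EUu n u i q

/-- `Ξ(u) = Σ_{p,q} e_p e_q' E_{pq}(u)`. -/
noncomputable def Xi (n : ℕ) (u : ℂ) : AlgA n :=
  ∑ p : Fin (n+1), ∑ q : Fin (n+1), eL n p * eR n q * EUu n u p q

/-- `Ξ^{(k)}(u) = Ξ(u) Ξ(u−1) ⋯ Ξ(u−k+1)`. -/
noncomputable def XiPow (n : ℕ) (k : ℕ) (u : ℂ) : AlgA n :=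
  ((List.range k).map (fun m => Xi n (u - (m : ℕ)))).prod

/-! auxiliary -/

noncomputable def Mb (n : ℕ) (a b : Fin (n+1)) : Matrix (Fin (n+1)) (Fin (n+1)) ℂ :=
  Matrix.single a b 1

noncomputable def iu (n : ℕ) (a b : Fin (n+1)) : UglC n :=
  UniversalEnvelopingAlgebra.ι ℂ (Mb n a b)

noncomputable def Ev (n : ℕ) (v : ℂ) (a b : Fin (n+1)) : UglC n :=
  iu n a b + algebraMap ℂ (UglC n) (if a = b then v else 0)

lemma Mb_mul (n : ℕ) (a b c d : Fin (n+1)) :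
    Mb n a b * Mb n c d = if b = c then Mb n a d else 0 := by
  unfold Mb; by_cases h : b = c
  · subst h; simp
  · rw [Matrix.single_mul_single_of_ne (h := h), if_neg h]

lemma iu_swap (n : ℕ) (a b c d : Fin (n+1)) :
    iu n a b * iu n c d = iu n c d * iu n a b
      + ((if b = c then iu n a d else 0) - (if d = a then iu n c b else 0)) := by
  have h := LieHom.map_lie
    (UniversalEnvelopingAlgebra.ι ℂ (L := Matrix (Fin (n+1)) (Fin (n+1)) ℂ)) (Mb n a b) (Mb n c d)
  simp only [Ring.lie_def, map_sub] at h
  rw [Mb_mul, Mb_mul] at h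
  simp only [apply_ite (⇑(UniversalEnvelopingAlgebra.ι ℂ)), map_zero] at h
  unfold iu
  rw [h]; abel

lemma keyL (n : ℕ) (v : ℂ) (a b c d : Fin (n+1)) :
    Ev n (v+1) a b * Ev n v c d + Ev n (v+1) a d * Ev n v c b
      = Ev n (v+1) c b * Ev n v a d + Ev n (v+1) c d * Ev n v a b := by
  unfold Ev
  simp only [add_mul, mul_add]
  rw [iu_swap n a b c d, iu_swap n a d c b]
  simp only [@eq_comm (Fin (n+1)) d a, @eq_comm (Fin (n+1)) d c, @eq_comm (Fin (n+1)) b a,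
    @eq_comm (Fin (n+1)) b c]
  simp only [← map_mul]
  simp only [← Algebra.commutes]
  simp only [← Algebra.smul_def]
  simp only [Algebra.algebraMap_eq_smul_one]
  split_ifs <;>
    (try simp only [zero_smul, smul_zero, zero_mul, mul_zero, add_zero, zero_add, sub_zero,
      zero_sub]) <;>
    module

lemma keyR (n : ℕ) (v : ℂ) (a b c d : Fin (n+1)) :
    Ev n v b a * Ev n (v+1) d c + Ev n v d a * Ev n (v+1) b c
      = Ev n v b c * Ev n (v+1) d a + Ev n v d c * Ev n (v+1) b a := by
  unfold Ev
  simp only [add_mul, mul_add]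
  rw [iu_swap n b a d c, iu_swap n d a b c]
  simp only [@eq_comm (Fin (n+1)) b a, @eq_comm (Fin (n+1)) d c, @eq_comm (Fin (n+1)) d a,
    @eq_comm (Fin (n+1)) b c]
  simp only [← map_mul]
  simp only [← Algebra.commutes]
  simp only [← Algebra.smul_def]
  simp only [Algebra.algebraMap_eq_smul_one]
  split_ifs <;>
    (try simp only [zero_smul, smul_zero, zero_mul, mul_zero, add_zero, zero_add, sub_zero,
      zero_sub]) <;>
    module

lemma EUu_eq (n : ℕ) (u : ℂ) (a b : Fin (n+1)) :
    EUu n u a b = (1:ExtC n) ⊗ₜ[ℂ] Ev n u a b := by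
  unfold EUu EU Ev iu Mb
  rw [TensorProduct.tmul_add]
  congr 1
  split_ifs
  · have h := (Algebra.TensorProduct.includeRight
      (R:=ℂ) (A:=ExtC n) (B:=UglC n)).commutes u
    rw [Algebra.TensorProduct.includeRight_apply] at h
    exact h.symm
  · rw [map_zero, TensorProduct.tmul_zero]

lemma GsymmL (n : ℕ) (u : ℂ) (i j p q : Fin (n+1)) :
    EUu n (u+1) p i * EUu n u q j + EUu n (u+1) p j * EUu n u q i
      = EUu n (u+1) q i * EUu n u p j + EUu n (u+1) q j * EUu n u p i := by
  simp only [EUu_eq, Algebra.TensorProduct.tmul_mul_tmul, one_mul, ← TensorProduct.tmul_add]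
  rw [keyL n u p i q j]

lemma GsymmR (n : ℕ) (u : ℂ) (i j p q : Fin (n+1)) :
    EUu n u i p * EUu n (u+1) j q + EUu n u j p * EUu n (u+1) i q
      = EUu n u i q * EUu n (u+1) j p + EUu n u j q * EUu n (u+1) i p := by
  simp only [EUu_eq, Algebra.TensorProduct.tmul_mul_tmul, one_mul, ← TensorProduct.tmul_add]
  rw [keyR n u p i q j]

lemma EUu_tmul_comm (n : ℕ) (u : ℂ) (a b : Fin (n+1)) (x : ExtC n) :
    EUu n u a b * (x ⊗ₜ[ℂ] (1:UglC n)) = (x ⊗ₜ[ℂ] (1:UglC n)) * EUu n u a b := by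
  rw [EUu_eq, Algebra.TensorProduct.tmul_mul_tmul, Algebra.TensorProduct.tmul_mul_tmul,
    one_mul, mul_one, one_mul, mul_one]

lemma EUu_eL_comm (n : ℕ) (u : ℂ) (a b p : Fin (n+1)) :
    EUu n u a b * eL n p = eL n p * EUu n u a b := by
  unfold eL; exact EUu_tmul_comm n u a b _

lemma EUu_eR_comm (n : ℕ) (u : ℂ) (a b p : Fin (n+1)) :
    EUu n u a b * eR n p = eR n p * EUu n u a b := by
  unfold eR; exact EUu_tmul_comm n u a b _

lemma ext_anti (n : ℕ) (x y : (Fin (n+1) ⊕ Fin (n+1)) → ℂ) :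
    ((ExteriorAlgebra.ι ℂ x ⊗ₜ[ℂ] (1:UglC n)) : AlgA n) * (ExteriorAlgebra.ι ℂ y ⊗ₜ[ℂ] 1)
      = -((ExteriorAlgebra.ι ℂ y ⊗ₜ[ℂ] (1:UglC n)) * (ExteriorAlgebra.ι ℂ x ⊗ₜ[ℂ] 1)) := by
  have h : ExteriorAlgebra.ι ℂ x * ExteriorAlgebra.ι ℂ y
      = -(ExteriorAlgebra.ι ℂ y * ExteriorAlgebra.ι ℂ x) :=
    eq_neg_of_add_eq_zero_left (ExteriorAlgebra.ι_add_mul_swap x y)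
  rw [Algebra.TensorProduct.tmul_mul_tmul, Algebra.TensorProduct.tmul_mul_tmul, h, TensorProduct.neg_tmul]

/-- In `A = Λ ⊗ U(𝔤𝔩_{n+1}(ℂ))`, for all `i, j` and all `u ∈ ℂ`:
`η_i(u+1) η_j(u) + η_j(u+1) η_i(u) = 0` and `η_i'(u) η_j'(u+1) + η_j'(u) η_i'(u+1) = 0`. -/
theorem eta_anticommute (n : ℕ) (i j : Fin (n+1)) (u : ℂ) :
    etaL n (u+1) i * etaL n u j + etaL n (u+1) j * etaL n u i = 0 ∧
    etaR n u i * etaR n (u+1) j + etaR n u j * etaR n (u+1) i = 0 := by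
  have etaL_mul : ∀ (v w : ℂ) (a b : Fin (n+1)),
      etaL n v a * etaL n w b
        = ∑ p : Fin (n+1), ∑ q : Fin (n+1), eL n p * eL n q * (EUu n v p a * EUu n w q b) := by
    intro v w a b
    unfold etaL
    rw [Finset.sum_mul_sum]
    refine Finset.sum_congr rfl fun p _ => Finset.sum_congr rfl fun q _ => ?_
    have h : EUu n v p a * (eL n q * EUu n w q b) = eL n q * (EUu n v p a * EUu n w q b) := by
      rw [← mul_assoc, EUu_eL_comm, mul_assoc]
    rw [mul_assoc, h, ← mul_assoc]
  have etaR_mul : ∀ (v w : ℂ) (a b : Fin (n+1)),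
      etaR n v a * etaR n w b
        = ∑ p : Fin (n+1), ∑ q : Fin (n+1), eR n p * eR n q * (EUu n v a p * EUu n w b q) := by
    intro v w a b
    unfold etaR
    rw [Finset.sum_mul_sum]
    refine Finset.sum_congr rfl fun p _ => Finset.sum_congr rfl fun q _ => ?_
    have h : EUu n v a p * (eR n q * EUu n w b q) = eR n q * (EUu n v a p * EUu n w b q) := by
      rw [← mul_assoc, EUu_eR_comm, mul_assoc]
    rw [mul_assoc, h, ← mul_assoc]
  have halve : ∀ S : AlgA n, S = -S → S = 0 := by
    intro S hS
    have h2 : (2:ℂ) • S = 0 := by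
      rw [two_smul]
      nth_rewrite 2 [hS]
      exact add_neg_cancel S
    have h4 : (2:ℂ)⁻¹ • ((2:ℂ) • S) = 0 := by rw [h2, smul_zero]
    rwa [smul_smul, (by norm_num : (2:ℂ)⁻¹ * 2 = 1), one_smul] at h4
  constructor
  · set f : Fin (n+1) → Fin (n+1) → AlgA n := fun p q =>
      eL n p * eL n q * (EUu n (u+1) p i * EUu n u q j + EUu n (u+1) p j * EUu n u q i) with hf
    have hfneg : ∀ p q, f q p = - f p q := by
      intro p q
      rw [hf]
      simp only
      rw [GsymmL n u i j q p]
      unfold eL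
      rw [ext_anti, neg_mul]
    have hS : etaL n (u+1) i * etaL n u j + etaL n (u+1) j * etaL n u i
        = ∑ p : Fin (n+1), ∑ q : Fin (n+1), f p q := by
      rw [etaL_mul, etaL_mul, ← Finset.sum_add_distrib]
      refine Finset.sum_congr rfl fun p _ => ?_
      rw [← Finset.sum_add_distrib]
      refine Finset.sum_congr rfl fun q _ => ?_
      rw [hf]; simp only; rw [mul_add]
    refine halve _ ?_
    rw [hS]
    calc ∑ p : Fin (n+1), ∑ q : Fin (n+1), f p q
        = ∑ q : Fin (n+1), ∑ p : Fin (n+1), f p q := Finset.sum_comm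
      _ = ∑ p : Fin (n+1), ∑ q : Fin (n+1), f q p := rfl
      _ = ∑ p : Fin (n+1), ∑ q : Fin (n+1), -(f p q) := by
          refine Finset.sum_congr rfl fun p _ => Finset.sum_congr rfl fun q _ => hfneg p q
      _ = -∑ p : Fin (n+1), ∑ q : Fin (n+1), f p q := by
          simp [Finset.sum_neg_distrib]
  · set f : Fin (n+1) → Fin (n+1) → AlgA n := fun p q =>
      eR n p * eR n q * (EUu n u i p * EUu n (u+1) j q + EUu n u j p * EUu n (u+1) i q) with hf
    have hfneg : ∀ p q, f q p = - f p q := by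
      intro p q
      rw [hf]
      simp only
      rw [GsymmR n u i j p q]
      unfold eR
      rw [ext_anti, neg_mul]
    have hS : etaR n u i * etaR n (u+1) j + etaR n u j * etaR n (u+1) i
        = ∑ p : Fin (n+1), ∑ q : Fin (n+1), f p q := by
      rw [etaR_mul, etaR_mul, ← Finset.sum_add_distrib]
      refine Finset.sum_congr rfl fun p _ => ?_
      rw [← Finset.sum_add_distrib]
      refine Finset.sum_congr rfl fun q _ => ?_
      rw [hf]; simp only; rw [mul_add]
    refine halve _ ?_
    rw [hS]
    calc ∑ p : Fin (n+1), ∑ q : Fin (n+1), f p q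
        = ∑ q : Fin (n+1), ∑ p : Fin (n+1), f p q := Finset.sum_comm
      _ = ∑ p : Fin (n+1), ∑ q : Fin (n+1), f q p := rfl
      _ = ∑ p : Fin (n+1), ∑ q : Fin (n+1), -(f p q) := by
          refine Finset.sum_congr rfl fun p _ => Finset.sum_congr rfl fun q _ => hfneg p q
      _ = -∑ p : Fin (n+1), ∑ q : Fin (n+1), f p q := by
          simp [Finset.sum_neg_distrib]
end

section
/- In the algebra A := Λ ⊗_ℂ U(𝔤𝔩_{n+1}(ℂ)), for all u, v ∈ ℂ the elements Ξ(u) and Ξ(v) commute: Ξ(u)·Ξ(v) = Ξ(v)·Ξ(u). -/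
open scoped TensorProduct

set_option synthInstance.maxHeartbeats 1000000

attribute [local instance 100] LieRing.ofAssociativeRing

/-! Auxiliary lemmas -/

/-- Generic image of an exterior vector in `A`. -/
noncomputable def iotaA (n : ℕ) (x : (Fin (n+1) ⊕ Fin (n+1)) → ℂ) : AlgA n :=
  (ExteriorAlgebra.ι ℂ x) ⊗ₜ[ℂ] 1

lemma eL_eq (n i) : eL n i = iotaA n (Pi.single (Sum.inl i) 1) := rfl
lemma eR_eq (n i) : eR n i = iotaA n (Pi.single (Sum.inr i) 1) := rfl

lemma iotaA_anticomm (n : ℕ) (x y : (Fin (n+1) ⊕ Fin (n+1)) → ℂ) :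
    iotaA n x * iotaA n y = -(iotaA n y * iotaA n x) := by
  unfold iotaA
  rw [Algebra.TensorProduct.tmul_mul_tmul, Algebra.TensorProduct.tmul_mul_tmul, mul_one]
  rw [eq_neg_iff_add_eq_zero, ← TensorProduct.add_tmul,
    ExteriorAlgebra.ι_add_mul_swap, TensorProduct.zero_tmul]

lemma iotaA_deg2_comm (n : ℕ) (a b c d : (Fin (n+1) ⊕ Fin (n+1)) → ℂ) :
    iotaA n a * iotaA n b * (iotaA n c * iotaA n d)
      = iotaA n c * iotaA n d * (iotaA n a * iotaA n b) := by
  have h := iotaA_anticomm n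
  calc iotaA n a * iotaA n b * (iotaA n c * iotaA n d)
      = iotaA n a * (iotaA n b * iotaA n c) * iotaA n d := by noncomm_ring
    _ = iotaA n a * (-(iotaA n c * iotaA n b)) * iotaA n d := by rw [h b c]
    _ = -((iotaA n a * iotaA n c) * (iotaA n b * iotaA n d)) := by noncomm_ring
    _ = -(-(iotaA n c * iotaA n a) * (iotaA n b * iotaA n d)) := by rw [h a c]
    _ = iotaA n c * (iotaA n a * (iotaA n b * iotaA n d)) := by noncomm_ring
    _ = iotaA n c * (iotaA n a * (-(iotaA n d * iotaA n b))) := by rw [h b d]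
    _ = -(iotaA n c * (iotaA n a * iotaA n d) * iotaA n b) := by noncomm_ring
    _ = -(iotaA n c * (-(iotaA n d * iotaA n a)) * iotaA n b) := by rw [h a d]
    _ = iotaA n c * iotaA n d * (iotaA n a * iotaA n b) := by noncomm_ring

lemma EU_comm_iotaA (n : ℕ) (i j : Fin (n+1)) (x : (Fin (n+1) ⊕ Fin (n+1)) → ℂ) :
    EU n i j * iotaA n x = iotaA n x * EU n i j := by
  unfold EU iotaA
  rw [Algebra.TensorProduct.tmul_mul_tmul, Algebra.TensorProduct.tmul_mul_tmul,
    one_mul, mul_one, one_mul, mul_one]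

/-- `S = Σ_p e_p e_p'`. -/
noncomputable def SS (n : ℕ) : AlgA n := ∑ p : Fin (n+1), eL n p * eR n p

lemma EUu_eq_s4 (n : ℕ) (u : ℂ) (p q : Fin (n+1)) :
    EUu n u p q = EU n p q + (if p = q then u • (1 : AlgA n) else 0) := by
  rw [EUu, Algebra.algebraMap_eq_smul_one]

lemma Xi0_eq (n : ℕ) :
    Xi n 0 = ∑ p : Fin (n+1), ∑ q : Fin (n+1), eL n p * eR n q * EU n p q := by
  unfold Xi
  simp [EUu_eq_s4, zero_smul, ite_self]

lemma Xi_eq (n : ℕ) (u : ℂ) : Xi n u = Xi n 0 + u • SS n := by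
  rw [Xi0_eq]
  unfold Xi SS
  rw [Finset.smul_sum, ← Finset.sum_add_distrib]
  refine Finset.sum_congr rfl fun p _ => ?_
  simp only [EUu_eq_s4, mul_add, mul_ite, mul_zero, Finset.sum_add_distrib,
    Finset.sum_ite_eq, Finset.mem_univ, if_true, mul_smul_comm, mul_one]

lemma EU_comm_ee (n : ℕ) (i j p : Fin (n+1)) :
    EU n i j * (eL n p * eR n p) = eL n p * eR n p * EU n i j := by
  rw [eL_eq, eR_eq, ← mul_assoc, EU_comm_iotaA, mul_assoc, EU_comm_iotaA, ← mul_assoc]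

lemma SS_comm_Xi0 (n : ℕ) : SS n * Xi n 0 = Xi n 0 * SS n := by
  rw [Xi0_eq, SS]
  rw [Finset.sum_mul, Finset.mul_sum]
  refine Finset.sum_congr rfl fun p _ => ?_
  rw [Finset.mul_sum, Finset.sum_mul]
  refine Finset.sum_congr rfl fun a _ => ?_
  rw [Finset.mul_sum, Finset.sum_mul]
  refine Finset.sum_congr rfl fun b _ => ?_
  have h2 := iotaA_deg2_comm n (Pi.single (Sum.inl p) 1) (Pi.single (Sum.inr p) 1)
    (Pi.single (Sum.inl a) 1) (Pi.single (Sum.inr b) 1)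
  rw [← eL_eq, ← eR_eq, ← eL_eq, ← eR_eq] at h2
  calc eL n p * eR n p * (eL n a * eR n b * EU n a b)
      = (eL n p * eR n p * (eL n a * eR n b)) * EU n a b := by noncomm_ring
    _ = (eL n a * eR n b * (eL n p * eR n p)) * EU n a b := by rw [h2]
    _ = eL n a * eR n b * (EU n a b * (eL n p * eR n p)) := by
        rw [mul_assoc, EU_comm_ee]
    _ = eL n a * eR n b * EU n a b * (eL n p * eR n p) := by noncomm_ring

/-- In `A = Λ ⊗ U(𝔤𝔩_{n+1}(ℂ))`, for all `u, v ∈ ℂ` the elements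
`Ξ(u)` and `Ξ(v)` commute. -/
theorem Xi_commute (n : ℕ) (u v : ℂ) :
    Xi n u * Xi n v = Xi n v * Xi n u := by
  rw [Xi_eq n u, Xi_eq n v]
  simp only [mul_add, add_mul, smul_mul_assoc, mul_smul_comm, smul_smul, SS_comm_Xi0]

  module
end

section
/- In the algebra A := Λ ⊗_ℂ U(𝔤𝔩_{n+1}(ℂ)), for every integer k ≥ 1, every j ∈ {1,…,n+1} and every u ∈ ℂ one has Ξ^{(k)}(u) = k·η_j(u)·e_j'·Ξ^{(k−1)}(u−1) + (Ξ(u) − η_j(u)·e_j')·(Ξ(u−1) − η_j(u−1)·e_j') ⋯ (Ξ(u−k+1) − η_j(u−k+1)·e_j'). -/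
open scoped TensorProduct

attribute [local instance 100] LieRing.ofAssociativeRing
attribute [local instance 100] LieAlgebra.ofAssociativeAlgebra

set_option maxHeartbeats 1000000
set_option synthInstance.maxHeartbeats 400000

namespace XiAux
variable {n : ℕ}

lemma ext_anticomm (x y : (Fin (n+1) ⊕ Fin (n+1)) → ℂ) :
    (ExteriorAlgebra.ι ℂ x : ExtC n) * ExteriorAlgebra.ι ℂ y
      = -(ExteriorAlgebra.ι ℂ y * ExteriorAlgebra.ι ℂ x) :=
  eq_neg_of_add_eq_zero_left (ExteriorAlgebra.ι_add_mul_swap x y)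

lemma tmul_anticomm (x y : (Fin (n+1) ⊕ Fin (n+1)) → ℂ) :
    ((ExteriorAlgebra.ι ℂ x ⊗ₜ[ℂ] 1 : AlgA n)) * (ExteriorAlgebra.ι ℂ y ⊗ₜ[ℂ] 1)
      = -((ExteriorAlgebra.ι ℂ y ⊗ₜ[ℂ] 1) * (ExteriorAlgebra.ι ℂ x ⊗ₜ[ℂ] 1)) := by
  rw [Algebra.TensorProduct.tmul_mul_tmul, Algebra.TensorProduct.tmul_mul_tmul,
    ext_anticomm, TensorProduct.neg_tmul]

lemma eL_mul_eL (p q : Fin (n+1)) : eL n p * eL n q = -(eL n q * eL n p) := tmul_anticomm _ _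

lemma matrix_comm (p q r s : Fin (n+1)) :
    (Matrix.single p q (1:ℂ)) * Matrix.single r s 1
      - Matrix.single r s 1 * Matrix.single p q 1
      = (if q = r then Matrix.single p s 1 else 0)
        - (if s = p then Matrix.single r q 1 else 0) := by
  by_cases hqr : q = r <;> by_cases hsp : s = p <;>
    simp [hqr, hsp, Matrix.single_mul_single_same,
      Matrix.single_mul_single_of_ne, Ne.symm]

lemma EU_mul_EU_sub (p q r s : Fin (n+1)) :
    EU n p q * EU n r s - EU n r s * EU n p q
      = (if q = r then EU n p s else 0) - (if s = p then EU n r q else 0) := by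
  simp only [EU, Algebra.TensorProduct.tmul_mul_tmul, one_mul]
  rw [← TensorProduct.tmul_sub]
  have h : (UniversalEnvelopingAlgebra.ι ℂ (Matrix.single p q (1:ℂ)))
        * UniversalEnvelopingAlgebra.ι ℂ (Matrix.single r s 1)
      - UniversalEnvelopingAlgebra.ι ℂ (Matrix.single r s 1)
        * UniversalEnvelopingAlgebra.ι ℂ (Matrix.single p q 1)
      = UniversalEnvelopingAlgebra.ι ℂ
          ((Matrix.single p q (1:ℂ)) * Matrix.single r s 1
            - Matrix.single r s 1 * Matrix.single p q 1) := by
    rw [show (Matrix.single p q (1:ℂ)) * Matrix.single r s 1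
            - Matrix.single r s 1 * Matrix.single p q 1
          = ⁅Matrix.single p q (1:ℂ), Matrix.single r s 1⁆ from
        (Ring.lie_def _ _).symm, LieHom.map_lie, Ring.lie_def]
  rw [h, matrix_comm]
  split_ifs <;> simp [TensorProduct.tmul_sub, TensorProduct.tmul_neg, TensorProduct.neg_tmul]

/-- The `U`-side element of `EUu`. -/
noncomputable def Gg (u : ℂ) (p q : Fin (n+1)) : UglC n :=
  UniversalEnvelopingAlgebra.ι ℂ (Matrix.single p q 1)
    + if p = q then algebraMap ℂ (UglC n) u else 0

lemma EUu_tmul (u : ℂ) (p q : Fin (n+1)) :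
    EUu n u p q = (1:ExtC n) ⊗ₜ[ℂ] Gg u p q := by
  rw [EUu, EU, Gg, TensorProduct.tmul_add]
  congr 1
  split_ifs
  · rw [Algebra.TensorProduct.algebraMap_apply, Algebra.algebraMap_eq_smul_one,
      Algebra.algebraMap_eq_smul_one, TensorProduct.smul_tmul]
  · rw [TensorProduct.tmul_zero]

/-- scalar form of `EUu`. -/
lemma EUu_eq_smul (u : ℂ) (p q : Fin (n+1)) :
    EUu n u p q = EU n p q + (u * if p = q then (1:ℂ) else 0) • (1 : AlgA n) := by
  rw [EUu]
  split_ifs <;> simp [Algebra.algebraMap_eq_smul_one]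

lemma ite_eq_smul (c : Prop) [Decidable c] (x : AlgA n) :
    (if c then x else 0) = (if c then (1:ℂ) else 0) • x := by
  split_ifs <;> simp

/-- The crucial `U(𝔤𝔩)` commutation computation. -/
lemma Csplit (u : ℂ) (p q r j : Fin (n+1)) :
    EUu n u p q * EUu n (u-1) r j - EUu n u r j * EUu n (u-1) p q
      = ((if q = r then EU n p j else 0) + (if p = q then EU n r j else 0))
        - ((if j = p then EU n r q else 0) + (if r = j then EU n p q else 0)) := by
  have hAB : EU n p q * EU n r j
      = EU n r j * EU n p q
        + ((if q = r then EU n p j else 0) - (if j = p then EU n r q else 0)) := by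
    exact (sub_eq_iff_eq_add.mp (EU_mul_EU_sub p q r j)).trans (add_comm _ _)
  rw [EUu_eq_smul u p q, EUu_eq_smul (u-1) r j, EUu_eq_smul u r j, EUu_eq_smul (u-1) p q,
    ite_eq_smul (p = q) (EU n r j), ite_eq_smul (r = j) (EU n p q)]
  simp only [mul_add, add_mul, smul_mul_assoc, mul_smul_comm, mul_one, one_mul, smul_smul]
  rw [hAB]
  module

/-- exterior-algebra sign computations -/
lemma ext_swap (x y z w : (Fin (n+1) ⊕ Fin (n+1)) → ℂ) :
    (ExteriorAlgebra.ι ℂ x : ExtC n) * ExteriorAlgebra.ι ℂ y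
        * (ExteriorAlgebra.ι ℂ z * ExteriorAlgebra.ι ℂ w)
      = -(ExteriorAlgebra.ι ℂ x * ExteriorAlgebra.ι ℂ z
          * (ExteriorAlgebra.ι ℂ y * ExteriorAlgebra.ι ℂ w)) := by
  rw [← mul_assoc, mul_assoc (ExteriorAlgebra.ι ℂ x) (ExteriorAlgebra.ι ℂ y)
      (ExteriorAlgebra.ι ℂ z), ext_anticomm y z]
  simp only [mul_neg, neg_mul, mul_assoc]

lemma ext_swap2 (x y z w : (Fin (n+1) ⊕ Fin (n+1)) → ℂ) :
    (ExteriorAlgebra.ι ℂ x : ExtC n) * ExteriorAlgebra.ι ℂ y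
        * (ExteriorAlgebra.ι ℂ z * ExteriorAlgebra.ι ℂ w)
      = -(ExteriorAlgebra.ι ℂ z * ExteriorAlgebra.ι ℂ x
          * (ExteriorAlgebra.ι ℂ w * ExteriorAlgebra.ι ℂ y)) := by
  rw [ext_swap, ext_anticomm x z, ext_anticomm y w]
  simp only [mul_neg, neg_mul, neg_neg, mul_assoc]

lemma ext4zero (x y z : (Fin (n+1) ⊕ Fin (n+1)) → ℂ) :
    (ExteriorAlgebra.ι ℂ x : ExtC n) * ExteriorAlgebra.ι ℂ y
        * (ExteriorAlgebra.ι ℂ z * ExteriorAlgebra.ι ℂ y) = 0 := by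
  have h : (ExteriorAlgebra.ι ℂ y : ExtC n) * (ExteriorAlgebra.ι ℂ z * ExteriorAlgebra.ι ℂ y)
      = 0 := by
    rw [← mul_assoc, ext_anticomm y z, neg_mul, mul_assoc, ExteriorAlgebra.ι_sq_zero,
      mul_zero, neg_zero]
  rw [mul_assoc, h, mul_zero]

/-- canonical form of a left-hand term -/
lemma termL (u v : ℂ) (p q r j : Fin (n+1)) :
    eL n p * eR n q * EUu n u p q * (eL n r * EUu n v r j * eR n j)
      = -(eL n p * eL n r * (eR n q * eR n j) * (EUu n u p q * EUu n v r j)) := by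
  simp only [eL, eR, EUu_tmul, Algebra.TensorProduct.tmul_mul_tmul, one_mul, mul_one]
  rw [← TensorProduct.neg_tmul]
  congr 1
  exact ext_swap _ _ _ _

/-- canonical form of a right-hand term -/
lemma termR (u v : ℂ) (p q r j : Fin (n+1)) :
    eL n r * EUu n u r j * eR n j * (eL n p * eR n q * EUu n v p q)
      = -(eL n p * eL n r * (eR n q * eR n j) * (EUu n u r j * EUu n v p q)) := by
  simp only [eL, eR, EUu_tmul, Algebra.TensorProduct.tmul_mul_tmul, one_mul, mul_one]
  rw [← TensorProduct.neg_tmul]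
  congr 1
  exact ext_swap2 _ _ _ _

/-- `Y(u) = η_j(u) e_j'`. -/
noncomputable def Yj (n : ℕ) (j : Fin (n+1)) (u : ℂ) : AlgA n := etaL n u j * eR n j

lemma termY (a b : ℂ) (p r j : Fin (n+1)) :
    eL n p * EUu n a p j * eR n j * (eL n r * EUu n b r j * eR n j) = 0 := by
  simp only [eL, eR, EUu_tmul, Algebra.TensorProduct.tmul_mul_tmul, one_mul, mul_one]
  rw [ext4zero, TensorProduct.zero_tmul]

/-- Lemma (A): `Y(a) Y(b) = 0`. -/
lemma Y_mul_Y (j : Fin (n+1)) (a b : ℂ) : Yj n j a * Yj n j b = 0 := by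
  simp only [Yj, etaL, Finset.sum_mul, Finset.mul_sum]
  refine Finset.sum_eq_zero fun p _ => Finset.sum_eq_zero fun r _ => termY a b r p j


lemma S14 (j : Fin (n+1)) :
    (∑ p : Fin (n+1), ∑ r : Fin (n+1), ∑ q : Fin (n+1),
        if q = r then eL n p * eL n r * (eR n q * eR n j) * EU n p j else 0)
      + (∑ p : Fin (n+1), ∑ r : Fin (n+1), ∑ q : Fin (n+1),
        if p = q then eL n p * eL n r * (eR n q * eR n j) * EU n r j else 0) = 0 := by
  simp only [Finset.sum_ite_irrel, Finset.sum_const_zero, Finset.sum_ite_eq,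
    Finset.sum_ite_eq', Finset.mem_univ, if_true]
  rw [show (∑ p : Fin (n+1), ∑ r : Fin (n+1),
        eL n p * eL n r * (eR n p * eR n j) * EU n r j)
      = ∑ p : Fin (n+1), ∑ r : Fin (n+1),
        eL n r * eL n p * (eR n r * eR n j) * EU n p j from Finset.sum_comm]
  rw [← Finset.sum_add_distrib]
  refine Finset.sum_eq_zero fun p _ => ?_
  rw [← Finset.sum_add_distrib]
  refine Finset.sum_eq_zero fun r _ => ?_
  rw [eL_mul_eL r p, neg_mul, neg_mul, add_neg_cancel]

lemma S23 (j : Fin (n+1)) :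
    (∑ p : Fin (n+1), ∑ r : Fin (n+1), ∑ q : Fin (n+1),
        if j = p then eL n p * eL n r * (eR n q * eR n j) * EU n r q else 0)
      + (∑ p : Fin (n+1), ∑ r : Fin (n+1), ∑ q : Fin (n+1),
        if r = j then eL n p * eL n r * (eR n q * eR n j) * EU n p q else 0) = 0 := by
  simp only [Finset.sum_ite_irrel, Finset.sum_const_zero, Finset.sum_ite_eq,
    Finset.sum_ite_eq', Finset.mem_univ, if_true]
  rw [← Finset.sum_add_distrib]
  refine Finset.sum_eq_zero fun r _ => ?_
  rw [← Finset.sum_add_distrib]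
  refine Finset.sum_eq_zero fun q _ => ?_
  rw [eL_mul_eL r j, neg_mul, neg_mul, add_neg_cancel]

lemma Yj_expand (j : Fin (n+1)) (v : ℂ) :
    Yj n j v = ∑ r : Fin (n+1), eL n r * EUu n v r j * eR n j := by
  rw [Yj, etaL, Finset.sum_mul]

/-- Lemma (B): `Ξ(u) Y(u-1) = Y(u) Ξ(u-1)`. -/
lemma key_comm (j : Fin (n+1)) (u : ℂ) :
    Xi n u * Yj n j (u-1) = Yj n j u * Xi n (u-1) := by
  have hL : Xi n u * Yj n j (u-1)
      = ∑ p : Fin (n+1), ∑ r : Fin (n+1), ∑ q : Fin (n+1),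
          -(eL n p * eL n r * (eR n q * eR n j) * (EUu n u p q * EUu n (u-1) r j)) := by
    rw [Yj_expand, Xi, Finset.sum_mul_sum]
    simp only [Finset.sum_mul]
    exact Finset.sum_congr rfl fun p _ => Finset.sum_congr rfl fun r _ =>
      Finset.sum_congr rfl fun q _ => termL u (u-1) p q r j
  have hR : Yj n j u * Xi n (u-1)
      = ∑ r : Fin (n+1), ∑ p : Fin (n+1), ∑ q : Fin (n+1),
          -(eL n p * eL n r * (eR n q * eR n j) * (EUu n u r j * EUu n (u-1) p q)) := by
    rw [Yj_expand, Xi, Finset.sum_mul_sum]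
    simp only [Finset.mul_sum]
    exact Finset.sum_congr rfl fun r _ => Finset.sum_congr rfl fun p _ =>
      Finset.sum_congr rfl fun q _ => termR u (u-1) p q r j
  have hR2 : Yj n j u * Xi n (u-1)
      = ∑ p : Fin (n+1), ∑ r : Fin (n+1), ∑ q : Fin (n+1),
          -(eL n p * eL n r * (eR n q * eR n j) * (EUu n u r j * EUu n (u-1) p q)) := by
    rw [hR]; exact Finset.sum_comm
  rw [hL, hR2, ← sub_eq_zero]
  simp only [← Finset.sum_sub_distrib]
  have hpt : ∀ p q r : Fin (n+1),
      -(eL n p * eL n r * (eR n q * eR n j) * (EUu n u p q * EUu n (u-1) r j))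
        - -(eL n p * eL n r * (eR n q * eR n j) * (EUu n u r j * EUu n (u-1) p q))
      = -(eL n p * eL n r * (eR n q * eR n j)
          * (EUu n u p q * EUu n (u-1) r j - EUu n u r j * EUu n (u-1) p q)) := by
    intro p q r
    rw [mul_sub, neg_sub_neg, neg_sub]
  simp only [hpt, Csplit]
  simp only [mul_sub, mul_add, mul_ite, mul_zero]
  simp only [Finset.sum_neg_distrib, Finset.sum_sub_distrib, Finset.sum_add_distrib]
  rw [S14 j, S23 j, sub_zero, neg_zero]


/-! ### Product manipulation -/

noncomputable def PZ (n : ℕ) (j : Fin (n+1)) (k : ℕ) (u : ℂ) : AlgA n :=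
  ((List.range k).map (fun m => Xi n (u - (m:ℕ)) - Yj n j (u - (m:ℕ)))).prod

lemma XiPow_zero (u : ℂ) : XiPow n 0 u = 1 := by simp [XiPow]
lemma PZ_zero (j : Fin (n+1)) (u : ℂ) : PZ n j 0 u = 1 := by simp [PZ]

lemma XiPow_succ (k : ℕ) (u : ℂ) : XiPow n (k+1) u = Xi n u * XiPow n k (u-1) := by
  rw [XiPow, XiPow, List.range_succ_eq_map, List.map_cons, List.prod_cons, List.map_map]
  congr 1
  · norm_num
  · congr 1
    apply List.map_congr_left
    intro i _
    simp only [Function.comp]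
    congr 1
    push_cast
    ring

lemma PZ_succ (j : Fin (n+1)) (k : ℕ) (u : ℂ) :
    PZ n j (k+1) u = (Xi n u - Yj n j u) * PZ n j k (u-1) := by
  rw [PZ, PZ, List.range_succ_eq_map, List.map_cons, List.prod_cons, List.map_map]
  congr 1
  · norm_num
  · congr 1
    apply List.map_congr_left
    intro i _
    simp only [Function.comp]
    congr 2 <;> · push_cast; ring

lemma XiPow_succ' (k : ℕ) (u : ℂ) :
    XiPow n (k+1) u = XiPow n k u * Xi n (u - (k:ℕ)) := by
  rw [XiPow, XiPow, List.range_succ, List.map_append, List.prod_append]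
  simp

/-- Lemma: move `Y` through a chain of `Ξ`'s from right to left. -/
lemma prodX_mul_Y (j : Fin (n+1)) (m : ℕ) :
    ∀ a : ℂ, XiPow n m a * Yj n j (a - (m:ℕ)) = Yj n j a * XiPow n m (a-1) := by
  induction m with
  | zero =>
    intro a
    rw [XiPow_zero, XiPow_zero, one_mul, mul_one]
    norm_num
  | succ m ih =>
    intro a
    have hc : a - ((m+1:ℕ):ℂ) = (a - (m:ℕ)) - 1 := by push_cast; ring
    rw [XiPow_succ', hc, mul_assoc, key_comm j (a - (m:ℕ)), ← mul_assoc, ih a,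
      show (a - (m:ℕ)) - 1 = (a - 1) - (m:ℕ) by ring, mul_assoc, ← XiPow_succ']

/-- Lemma: against `Y`, the product of `Z`'s behaves like the product of `Ξ`'s. -/
lemma Y_mul_PZ (j : Fin (n+1)) (m : ℕ) :
    ∀ a : ℂ, Yj n j a * PZ n j m (a-1) = Yj n j a * XiPow n m (a-1) := by
  induction m with
  | zero => intro a; rw [XiPow_zero, PZ_zero]
  | succ m ih =>
    intro a
    have PZs : PZ n j (m+1) (a-1)
        = PZ n j m (a-1) * (Xi n ((a-1) - (m:ℕ)) - Yj n j ((a-1) - (m:ℕ))) := by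
      rw [PZ, PZ, List.range_succ, List.map_append, List.prod_append]
      simp
    rw [PZs, ← mul_assoc, ih a, mul_assoc, mul_sub (XiPow n m (a-1)), mul_sub (Yj n j a)]
    rw [show XiPow n m (a-1) * Yj n j ((a-1) - (m:ℕ))
        = Yj n j (a-1) * XiPow n m ((a-1)-1) from prodX_mul_Y j m (a-1)]
    rw [← mul_assoc (Yj n j a) (Yj n j (a-1)), Y_mul_Y, zero_mul, sub_zero, ← XiPow_succ']

/-- Main induction. -/
lemma main_aux (j : Fin (n+1)) (k : ℕ) :
    ∀ u : ℂ, XiPow n (k+1) u = (k+1) • (Yj n j u * XiPow n k (u-1)) + PZ n j (k+1) u := by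
  induction k with
  | zero =>
    intro u
    rw [XiPow_succ, XiPow_zero, PZ_succ, PZ_zero, Nat.zero_add, one_smul]
    simp only [mul_one]
    abel
  | succ k ih =>
    intro u
    conv_lhs => rw [XiPow_succ (k+1) u, ih (u-1)]
    rw [mul_add, mul_smul_comm, ← mul_assoc, key_comm j u, mul_assoc, ← XiPow_succ]
    have hsplit : Xi n u * PZ n j (k+1) (u-1)
        = Yj n j u * PZ n j (k+1) (u-1) + (Xi n u - Yj n j u) * PZ n j (k+1) (u-1) := by
      rw [← add_mul]
      congr 1
      abel
    rw [hsplit, Y_mul_PZ, ← PZ_succ]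
    conv_rhs => rw [succ_nsmul]
    abel

end XiAux

/-- In `A = Λ ⊗ U(𝔤𝔩_{n+1}(ℂ))`, for every `k ≥ 1`, every `j` and every
`u ∈ ℂ`:
`Ξ^{(k)}(u) = k η_j(u) e_j' Ξ^{(k−1)}(u−1)
  + (Ξ(u) − η_j(u) e_j')(Ξ(u−1) − η_j(u−1) e_j') ⋯ (Ξ(u−k+1) − η_j(u−k+1) e_j')`. -/


theorem XiPow_expansion_left (n : ℕ) (k : ℕ) (hk : 1 ≤ k) (j : Fin (n+1)) (u : ℂ) :
    XiPow n k u
      = k • (etaL n u j * eR n j * XiPow n (k-1) (u-1))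
        + ((List.range k).map
            (fun m => Xi n (u - (m : ℕ)) - etaL n (u - (m : ℕ)) j * eR n j)).prod := by
  obtain ⟨k', rfl⟩ : ∃ k', k = k' + 1 := ⟨k - 1, (Nat.succ_pred_eq_of_pos hk).symm⟩
  have hlist : ((List.range (k'+1)).map
      (fun m => Xi n (u - (m:ℕ)) - etaL n (u - (m:ℕ)) j * eR n j)).prod
      = XiAux.PZ n j (k'+1) u := rfl
  rw [hlist, Nat.add_sub_cancel]
  exact XiAux.main_aux j k' u
end

section
/- In the algebra A := Λ ⊗_ℂ U(𝔤𝔩_{n+1}(ℂ)), for all i, j ∈ {1,…,n+1} with i ≠ j and all u ∈ ℂ one has η_i(u+n)·e_j'·Ξ^{(n)}(u+n−1) = 0. -/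
open scoped TensorProduct

attribute [local instance 100] LieRing.ofAssociativeRing
set_option synthInstance.maxHeartbeats 1000000
set_option maxHeartbeats 1000000

section Aux
variable (n : ℕ)

lemma aux_tmul_comm (x : ExtC n) (y : UglC n) :
    (x ⊗ₜ[ℂ] (1:UglC n)) * ((1:ExtC n) ⊗ₜ[ℂ] y) = ((1:ExtC n) ⊗ₜ[ℂ] y) * (x ⊗ₜ[ℂ] (1:UglC n)) := by
  simp [Algebra.TensorProduct.tmul_mul_tmul]

lemma aux_eL_eL (p r : Fin (n+1)) : eL n p * eL n r = -(eL n r * eL n p) := by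
  unfold eL
  simp only [Algebra.TensorProduct.tmul_mul_tmul, one_mul]
  rw [eq_neg_of_add_eq_zero_left (ExteriorAlgebra.ι_add_mul_swap _ _), TensorProduct.neg_tmul]

lemma aux_eR_eR (p r : Fin (n+1)) : eR n p * eR n r = -(eR n r * eR n p) := by
  unfold eR
  simp only [Algebra.TensorProduct.tmul_mul_tmul, one_mul]
  rw [eq_neg_of_add_eq_zero_left (ExteriorAlgebra.ι_add_mul_swap _ _), TensorProduct.neg_tmul]

lemma aux_eL_eR (p r : Fin (n+1)) : eL n p * eR n r = -(eR n r * eL n p) := by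
  unfold eL eR
  simp only [Algebra.TensorProduct.tmul_mul_tmul, one_mul]
  rw [eq_neg_of_add_eq_zero_left (ExteriorAlgebra.ι_add_mul_swap _ _), TensorProduct.neg_tmul]

lemma aux_eL_sq (p : Fin (n+1)) : eL n p * eL n p = 0 := by
  unfold eL
  simp [Algebra.TensorProduct.tmul_mul_tmul, ExteriorAlgebra.ι_sq_zero]

lemma aux_eR_sq (p : Fin (n+1)) : eR n p * eR n p = 0 := by
  unfold eR
  simp [Algebra.TensorProduct.tmul_mul_tmul, ExteriorAlgebra.ι_sq_zero]

lemma aux_eL_EUu (u : ℂ) (p a b : Fin (n+1)) :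
    eL n p * EUu n u a b = EUu n u a b * eL n p := by
  unfold EUu EU eL
  rw [mul_add, add_mul, aux_tmul_comm]
  congr 1
  split_ifs
  · exact (Algebra.commutes u _).symm
  · simp

lemma aux_eR_EUu (u : ℂ) (p a b : Fin (n+1)) :
    eR n p * EUu n u a b = EUu n u a b * eR n p := by
  unfold EUu EU eR
  rw [mul_add, add_mul, aux_tmul_comm]
  congr 1
  split_ifs
  · exact (Algebra.commutes u _).symm
  · simp


lemma aux_EU_swap (a b c d : Fin (n+1)) :
    EU n a b * EU n c d = EU n c d * EU n a b
      + (if c = b then EU n a d else 0) - (if a = d then EU n c b else 0) := by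
  have key : UniversalEnvelopingAlgebra.ι ℂ (Matrix.single a b (1:ℂ)) *
      UniversalEnvelopingAlgebra.ι ℂ (Matrix.single c d (1:ℂ))
    = UniversalEnvelopingAlgebra.ι ℂ (Matrix.single c d (1:ℂ)) *
      UniversalEnvelopingAlgebra.ι ℂ (Matrix.single a b (1:ℂ))
      + (if c = b then UniversalEnvelopingAlgebra.ι ℂ (Matrix.single a d (1:ℂ)) else 0)
      - (if a = d then UniversalEnvelopingAlgebra.ι ℂ (Matrix.single c b (1:ℂ)) else 0) := by
    have h := (UniversalEnvelopingAlgebra.ι ℂ (L := Matrix (Fin (n+1)) (Fin (n+1)) ℂ)).map_lie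
      (Matrix.single a b (1:ℂ)) (Matrix.single c d (1:ℂ))
    rw [Ring.lie_def, Ring.lie_def] at h
    have hbc : Matrix.single a b (1:ℂ) * Matrix.single c d 1
        = if c = b then Matrix.single a d 1 else 0 := by
      split_ifs with h1
      · subst h1; rw [Matrix.single_mul_single_same, one_mul]
      · exact Matrix.single_mul_single_of_ne (h := fun (hh : b = c) => h1 hh.symm) ..
    have hda : Matrix.single c d (1:ℂ) * Matrix.single a b 1
        = if a = d then Matrix.single c b 1 else 0 := by
      split_ifs with h1
      · subst h1; rw [Matrix.single_mul_single_same, one_mul]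
      · exact Matrix.single_mul_single_of_ne (h := fun (hh : d = a) => h1 hh.symm) ..
    rw [hbc, hda, map_sub] at h
    have hite : ∀ (c' : Prop) [Decidable c'] (x : Matrix (Fin (n+1)) (Fin (n+1)) ℂ),
        UniversalEnvelopingAlgebra.ι ℂ (if c' then x else 0)
          = if c' then UniversalEnvelopingAlgebra.ι ℂ x else 0 := by
      intro c' _ x; split_ifs <;> simp
    rw [hite, hite] at h
    linear_combination (norm := noncomm_ring) -h
  unfold EU
  simp only [Algebra.TensorProduct.tmul_mul_tmul, one_mul]
  rw [key]
  split_ifs <;> simp [TensorProduct.tmul_add, TensorProduct.tmul_sub]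

lemma aux_euu_eq (u : ℂ) (p a : Fin (n+1)) :
    EUu n u p a = EU n p a + (if p = a then u else 0) • (1 : AlgA n) := by
  unfold EUu
  congr 1
  split_ifs
  · rw [Algebra.algebraMap_eq_smul_one]
  · rw [zero_smul]

lemma aux_S_symm (u : ℂ) (p r a b : Fin (n+1)) :
    EUu n u p a * EUu n (u-1) r b + EUu n u p b * EUu n (u-1) r a
      = EUu n u r a * EUu n (u-1) p b + EUu n u r b * EUu n (u-1) p a := by
  simp only [aux_euu_eq, add_mul, mul_add, smul_mul_assoc, mul_smul_comm, smul_smul,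
    one_mul, mul_one]
  rw [aux_EU_swap n p a r b, aux_EU_swap n p b r a]
  have h1 : (if r = a then EU n p b else 0) = (if r = a then (1:ℂ) else 0) • EU n p b := by
    split_ifs <;> simp
  have h2 : (if p = b then EU n r a else 0) = (if p = b then (1:ℂ) else 0) • EU n r a := by
    split_ifs <;> simp
  have h3 : (if r = b then EU n p a else 0) = (if r = b then (1:ℂ) else 0) • EU n p a := by
    split_ifs <;> simp
  have h4 : (if p = a then EU n r b else 0) = (if p = a then (1:ℂ) else 0) • EU n r b := by
    split_ifs <;> simp
  have h5 : ∀ c : Prop, ∀ _ : Decidable c, (if c then u else 0) = (if c then (1:ℂ) else 0) * u := by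
    intro c _; split_ifs <;> simp
  have h6 : ∀ c : Prop, ∀ _ : Decidable c, (if c then u-1 else 0) = (if c then (1:ℂ) else 0) * (u-1) := by
    intro c _; split_ifs <;> simp
  rw [h1, h2, h3, h4, h5 _ _, h5 _ _, h5 _ _, h5 _ _, h6 _ _, h6 _ _, h6 _ _, h6 _ _]
  module


lemma aux_skew_sum {M : Type*} [AddCommGroup M] [Module ℂ M] {m : ℕ}
    (f : Fin m → Fin m → M) (h : ∀ p r, f p r = -(f r p)) :
    ∑ p : Fin m, ∑ r : Fin m, f p r = 0 := by
  have h1 : (∑ p : Fin m, ∑ r : Fin m, f p r) = -(∑ p : Fin m, ∑ r : Fin m, f p r) := by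
    calc (∑ p : Fin m, ∑ r : Fin m, f p r) = ∑ r : Fin m, ∑ p : Fin m, f p r :=
          Finset.sum_comm
      _ = ∑ r : Fin m, ∑ p : Fin m, -(f r p) :=
          Finset.sum_congr rfl fun r _ => Finset.sum_congr rfl fun p _ => h p r
      _ = -(∑ r : Fin m, ∑ p : Fin m, f r p) := by
          simp only [Finset.sum_neg_distrib]
  have h2 : (2:ℂ) • (∑ p : Fin m, ∑ r : Fin m, f p r) = 0 := by
    rw [two_smul]
    nth_rewrite 1 [h1]
    simp
  rcases smul_eq_zero.mp h2 with h' | h'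
  · norm_num at h'
  · exact h'

lemma aux_half {M : Type*} [AddCommGroup M] [Module ℂ M] (x : M) (h : x + x = 0) : x = 0 := by
  have h2 : (2:ℂ) • x = 0 := by rw [two_smul]; exact h
  rcases smul_eq_zero.mp h2 with h' | h'
  · norm_num at h'
  · exact h'

lemma aux_eta_swap (u : ℂ) (a b : Fin (n+1)) :
    etaL n u a * etaL n (u-1) b + etaL n u b * etaL n (u-1) a = 0 := by
  have hterm : ∀ p r : Fin (n+1),
      (eL n p * EUu n u p a * (eL n r * EUu n (u-1) r b)
        + eL n p * EUu n u p b * (eL n r * EUu n (u-1) r a))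
      = eL n p * eL n r * (EUu n u p a * EUu n (u-1) r b + EUu n u p b * EUu n (u-1) r a) := by
    intro p r
    rw [mul_add]
    congr 1 <;>
      rw [mul_assoc, ← mul_assoc (EUu n u p _), ← aux_eL_EUu, mul_assoc, mul_assoc, ← mul_assoc]
  have expand : etaL n u a * etaL n (u-1) b + etaL n u b * etaL n (u-1) a
      = ∑ p : Fin (n+1), ∑ r : Fin (n+1),
          eL n p * eL n r * (EUu n u p a * EUu n (u-1) r b + EUu n u p b * EUu n (u-1) r a) := by
    unfold etaL
    rw [Finset.sum_mul_sum, Finset.sum_mul_sum, ← Finset.sum_add_distrib]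
    refine Finset.sum_congr rfl fun p _ => ?_
    rw [← Finset.sum_add_distrib]
    exact Finset.sum_congr rfl fun r _ => hterm p r
  rw [expand]
  exact aux_skew_sum _ fun p r => by rw [aux_eL_eL, aux_S_symm, neg_mul]

lemma aux_eta_swap' (u : ℂ) (a b : Fin (n+1)) :
    etaL n u a * etaL n (u-1) b = -(etaL n u b * etaL n (u-1) a) :=
  eq_neg_of_add_eq_zero_left (aux_eta_swap n u a b)

lemma aux_eta_sq (u : ℂ) (a : Fin (n+1)) : etaL n u a * etaL n (u-1) a = 0 :=
  aux_half _ (aux_eta_swap n u a a)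


end Aux

/-- Product `η_{a_0}(w) η_{a_1}(w-1) ⋯` along a list with decreasing shifts. -/
noncomputable def Pprod (n : ℕ) : ℂ → List (Fin (n+1)) → AlgA n
  | _, [] => 1
  | w, a :: t => etaL n w a * Pprod n (w-1) t

/-- Product of `e'` basis vectors along a list. -/
noncomputable def eprodA (n : ℕ) (s : List (Fin (n+1))) : AlgA n := (s.map (eR n)).prod

section Aux2
variable (n : ℕ)

@[simp] lemma Pprod_nil (w : ℂ) : Pprod n w [] = 1 := rfl

lemma Pprod_cons (w : ℂ) (a : Fin (n+1)) (t : List (Fin (n+1))) :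
    Pprod n w (a :: t) = etaL n w a * Pprod n (w-1) t := rfl

@[simp] lemma eprodA_nil : eprodA n [] = 1 := rfl

lemma eprodA_cons (a : Fin (n+1)) (t : List (Fin (n+1))) :
    eprodA n (a :: t) = eR n a * eprodA n t := by
  simp [eprodA]

lemma eprodA_append (s : List (Fin (n+1))) (r : Fin (n+1)) :
    eprodA n (s ++ [r]) = eprodA n s * eR n r := by
  simp [eprodA]

lemma Pprod_append (w : ℂ) (l : List (Fin (n+1))) (r : Fin (n+1)) :
    Pprod n w (l ++ [r]) = Pprod n w l * etaL n (w - l.length) r := by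
  induction l generalizing w with
  | nil => simp [Pprod_cons]
  | cons a t ih =>
    rw [List.cons_append, Pprod_cons, Pprod_cons, ih, ← mul_assoc]
    congr 2
    push_cast [List.length_cons]
    ring

lemma aux_eR_mem (a : Fin (n+1)) (s : List (Fin (n+1))) (h : a ∈ s) :
    eR n a * eprodA n s = 0 := by
  induction s with
  | nil => cases h
  | cons b t ih =>
    rw [eprodA_cons, ← mul_assoc]
    rcases List.mem_cons.mp h with rfl | h'
    · rw [aux_eR_sq, zero_mul]
    · rw [aux_eR_eR, neg_mul, mul_assoc, ih h', mul_zero, neg_zero]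

lemma aux_eprod_dup (s : List (Fin (n+1))) (h : ¬ s.Nodup) : eprodA n s = 0 := by
  induction s with
  | nil => exact absurd List.nodup_nil h
  | cons b t ih =>
    rw [eprodA_cons]
    by_cases hb : b ∈ t
    · exact aux_eR_mem n b t hb
    · have : ¬ t.Nodup := fun hn => h (List.nodup_cons.mpr ⟨hb, hn⟩)
      rw [ih this, mul_zero]

lemma aux_eta_mem (a : Fin (n+1)) (t : List (Fin (n+1))) (h : a ∈ t) :
    ∀ w : ℂ, etaL n w a * Pprod n (w-1) t = 0 := by
  induction t with
  | nil => cases h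
  | cons b s ih =>
    intro w
    rw [Pprod_cons]
    rcases List.mem_cons.mp h with rfl | h'
    · rw [← mul_assoc, aux_eta_sq, zero_mul]
    · rw [← mul_assoc, aux_eta_swap', neg_mul, mul_assoc, ih h' (w-1), mul_zero, neg_zero]

lemma aux_P_dup (t : List (Fin (n+1))) (h : ¬ t.Nodup) : ∀ w : ℂ, Pprod n w t = 0 := by
  induction t with
  | nil => exact absurd List.nodup_nil h
  | cons a s ih =>
    intro w
    rw [Pprod_cons]
    by_cases ha : a ∈ s
    · exact aux_eta_mem n a s ha w
    · have : ¬ s.Nodup := fun hn => h (List.nodup_cons.mpr ⟨ha, hn⟩)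
      rw [ih this, mul_zero]

lemma aux_eR_eL (r p : Fin (n+1)) : eR n r * eL n p = -(eL n p * eR n r) := by
  unfold eL eR
  simp only [Algebra.TensorProduct.tmul_mul_tmul, one_mul]
  rw [eq_neg_of_add_eq_zero_left (ExteriorAlgebra.ι_add_mul_swap _ _), TensorProduct.neg_tmul]

lemma aux_eR_eta (u : ℂ) (q a : Fin (n+1)) :
    eR n q * etaL n u a = -(etaL n u a * eR n q) := by
  unfold etaL
  rw [Finset.mul_sum, Finset.sum_mul, ← Finset.sum_neg_distrib]
  refine Finset.sum_congr rfl fun p _ => ?_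
  rw [← mul_assoc, aux_eR_eL, neg_mul, mul_assoc, aux_eR_EUu, ← mul_assoc]

lemma aux_eprod_eta (u : ℂ) (a : Fin (n+1)) (s : List (Fin (n+1))) :
    eprodA n s * etaL n u a = ((-1:ℂ)^s.length) • (etaL n u a * eprodA n s) := by
  induction s with
  | nil => simp
  | cons b t ih =>
    calc eprodA n (b::t) * etaL n u a = eR n b * (eprodA n t * etaL n u a) := by
          rw [eprodA_cons, mul_assoc]
      _ = eR n b * (((-1:ℂ)^t.length) • (etaL n u a * eprodA n t)) := by rw [ih]
      _ = ((-1:ℂ)^t.length) • (eR n b * etaL n u a * eprodA n t) := by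
          rw [mul_smul_comm, mul_assoc]
      _ = ((-1:ℂ)^t.length) • (-(etaL n u a * eR n b) * eprodA n t) := by rw [aux_eR_eta]
      _ = ((-1:ℂ)^(b::t).length) • (etaL n u a * eprodA n (b::t)) := by
          rw [eprodA_cons, List.length_cons, pow_succ, neg_mul, mul_assoc, smul_neg,
            ← neg_smul]
          congr 1
          ring

lemma aux_Xi (v : ℂ) : Xi n v = ∑ q : Fin (n+1), etaL n v q * eR n q := by
  unfold Xi etaL
  rw [Finset.sum_comm]
  refine Finset.sum_congr rfl fun q _ => ?_
  rw [Finset.sum_mul]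
  refine Finset.sum_congr rfl fun p _ => ?_
  rw [mul_assoc, aux_eR_EUu, ← mul_assoc]

@[simp] lemma XiPow_zero (w : ℂ) : XiPow n 0 w = 1 := by simp [XiPow]

lemma XiPow_succ (k : ℕ) (w : ℂ) : XiPow n (k+1) w = Xi n w * XiPow n k (w-1) := by
  unfold XiPow
  rw [List.range_succ_eq_map, List.map_cons, List.prod_cons, List.map_map]
  have hfun : (fun m => Xi n (w - (m:ℕ))) ∘ Nat.succ = fun m => Xi n (w - 1 - (m:ℕ)) := by
    funext m
    simp only [Function.comp_apply]
    congr 1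
    push_cast
    ring
  rw [hfun]
  norm_num

end Aux2

lemma aux_main (n : ℕ) (i j : Fin (n+1)) (hij : i ≠ j) (u : ℂ) :
    ∀ (k : ℕ) (q : List (Fin (n+1))), q.length + k = n →
      Pprod n (u + n) (i :: q) * eprodA n (j :: q)
        * XiPow n k (u + n - 1 - q.length) = 0 := by
  intro k
  induction k with
  | zero =>
    intro q hq
    rw [XiPow_zero, mul_one]
    by_cases hnd : (i :: q).Nodup
    · have hcard : (i :: q).toFinset = Finset.univ := by
        apply Finset.eq_univ_of_card
        rw [List.toFinset_card_of_nodup hnd, List.length_cons, Fintype.card_fin]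
        omega
      have hjmem : j ∈ i :: q := by
        have h := Finset.mem_univ j
        rw [← hcard] at h
        exact List.mem_toFinset.mp h
      have hjq : j ∈ q := by
        rcases List.mem_cons.mp hjmem with h | h
        · exact absurd h.symm hij
        · exact h
      have hE : eprodA n (j :: q) = 0 := by
        apply aux_eprod_dup
        rw [List.nodup_cons]
        exact fun hh => hh.1 hjq
      rw [hE, mul_zero]
    · rw [aux_P_dup n _ hnd, zero_mul]
  | succ k ih =>
    intro q hq
    rw [XiPow_succ, aux_Xi, Finset.sum_mul, Finset.mul_sum]
    refine Finset.sum_eq_zero fun r _ => ?_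
    have c1 := aux_eprod_eta n (u + n - 1 - q.length) r (j :: q)
    have hshift : (u + (n:ℂ) - 1 - (q.length:ℂ)) = u + n - (((i::q).length : ℕ) : ℂ) := by
      rw [List.length_cons]
      push_cast
      ring
    have hX : XiPow n k (u + n - 1 - (q.length:ℂ) - 1)
        = XiPow n k (u + n - 1 - (((q ++ [r]).length : ℕ) : ℂ)) := by
      congr 1
      push_cast [List.length_append, List.length_singleton]
      ring
    calc Pprod n (u + n) (i :: q) * eprodA n (j :: q)
          * (etaL n (u + n - 1 - q.length) r * eR n r * XiPow n k (u + n - 1 - q.length - 1))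
        = Pprod n (u + n) (i :: q) * (eprodA n (j :: q) * etaL n (u + n - 1 - q.length) r)
          * (eR n r * XiPow n k (u + n - 1 - q.length - 1)) := by
          simp only [mul_assoc]
      _ = Pprod n (u + n) (i :: q)
          * (((-1:ℂ)^(j::q).length) • (etaL n (u + n - 1 - q.length) r * eprodA n (j :: q)))
          * (eR n r * XiPow n k (u + n - 1 - q.length - 1)) := by rw [c1]
      _ = ((-1:ℂ)^(j::q).length) • (Pprod n (u + n) (i :: q) * etaL n (u + n - 1 - q.length) r
          * (eprodA n (j :: q) * eR n r) * XiPow n k (u + n - 1 - q.length - 1)) := by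
          simp only [mul_smul_comm, smul_mul_assoc, mul_assoc]
      _ = ((-1:ℂ)^(j::q).length) • (Pprod n (u + n) ((i :: q) ++ [r])
          * eprodA n ((j :: q) ++ [r]) * XiPow n k (u + n - 1 - (((q ++ [r]).length : ℕ) : ℂ))) := by
          rw [hX, hshift, ← Pprod_append, ← eprodA_append]
      _ = 0 := by
          have h := ih (q ++ [r]) (by simp only [List.length_append, List.length_singleton]; omega)
          rw [List.cons_append, List.cons_append, h, smul_zero]


/-- In `A = Λ ⊗ U(𝔤𝔩_{n+1}(ℂ))`, for all `i ≠ j` and all `u ∈ ℂ`: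
`η_i(u+n) e_j' Ξ^{(n)}(u+n−1) = 0`. -/
theorem eta_eR_XiPow_eq_zero (n : ℕ) (i j : Fin (n+1)) (hij : i ≠ j) (u : ℂ) :
    etaL n (u + n) i * eR n j * XiPow n n (u + n - 1) = 0 := by

  have h := aux_main n i j hij u n [] (by simp)
  simp only [Pprod_cons, Pprod_nil, mul_one, List.length_nil, Nat.cast_zero, sub_zero] at h
  rw [eprodA_cons, eprodA_nil, mul_one] at h
  exact h
end

section
/- For any two distinct pairs (i,j) and (i',j') with 1 ≤ i, i' ≤ n−1, 2 ≤ j ≤ n+1−i and 2 ≤ j' ≤ n+1−i', the sets S_{i,j} and S_{i',j'} are disjoint: S_{i,j} ∩ S_{i',j'} = ∅. -/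
/-- The set `S_{i,j} ⊆ ℤ^{n−2}` (coordinates `γ_1,…,γ_{n−2}`, modelled as functions `ℕ → ℤ`
constrained on indices `1,…,n−2`):
`Λ_p−n/2+p ≥ γ_p ≥ Λ_{p+1}−n/2+p+1` for `1 ≤ p ≤ i−1`;
`Λ_{p+1}−n/2+p ≥ γ_p ≥ Λ_{p+2}−n/2+p+1` for `i ≤ p ≤ n−j`;
`Λ_{p+2}−n/2+p ≥ γ_p ≥ Λ_{p+3}−n/2+p+1` for `n−j+1 ≤ p ≤ n−2`. -/
def Sset (n : ℕ) (Λ : ℕ → ℝ) (i j : ℕ) : Set (ℕ → ℤ) :=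
  {γ | (∀ p : ℕ, 1 ≤ p → p < i →
          (γ p : ℝ) ≤ Λ p - n/2 + p ∧ Λ (p+1) - n/2 + p + 1 ≤ γ p)
     ∧ (∀ p : ℕ, i ≤ p → (p : ℤ) ≤ (n : ℤ) - j →
          (γ p : ℝ) ≤ Λ (p+1) - n/2 + p ∧ Λ (p+2) - n/2 + p + 1 ≤ γ p)
     ∧ (∀ p : ℕ, (n : ℤ) - j + 1 ≤ (p : ℤ) → (p : ℤ) ≤ (n : ℤ) - 2 →
          (γ p : ℝ) ≤ Λ (p+2) - n/2 + p ∧ Λ (p+3) - n/2 + p + 1 ≤ γ p)}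

/-- The set `B_{k,l} ⊆ ℤ^{n−2}` of branching weights:
`Λ_p−n/2+p ≥ γ_p ≥ Λ_{p+1}−n/2+p+1` for `1 ≤ p ≤ k−1`;
`Λ_k−n/2+k ≥ γ_k ≥ Λ_{k+2}−n/2+k+1` (omitted when `k = 0`);
`Λ_{p+1}−n/2+p ≥ γ_p ≥ Λ_{p+2}−n/2+p+1` for `k+1 ≤ p ≤ n−l−1`;
`Λ_{n−l+1}−n/2+(n−l) ≥ γ_{n−l} ≥ Λ_{n−l+3}−n/2+(n−l)+1` (omitted when `l = 1`);
`Λ_{p+2}−n/2+p ≥ γ_p ≥ Λ_{p+3}−n/2+p+1` for `n−l+1 ≤ p ≤ n−2`. -/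
def Bset (n : ℕ) (Λ : ℕ → ℝ) (k l : ℕ) : Set (ℕ → ℤ) :=
  {γ | (∀ p : ℕ, 1 ≤ p → p < k →
          (γ p : ℝ) ≤ Λ p - n/2 + p ∧ Λ (p+1) - n/2 + p + 1 ≤ γ p)
     ∧ (1 ≤ k → (γ k : ℝ) ≤ Λ k - n/2 + k ∧ Λ (k+2) - n/2 + k + 1 ≤ γ k)
     ∧ (∀ p : ℕ, k + 1 ≤ p → (p : ℤ) ≤ (n : ℤ) - l - 1 →
          (γ p : ℝ) ≤ Λ (p+1) - n/2 + p ∧ Λ (p+2) - n/2 + p + 1 ≤ γ p)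
     ∧ (2 ≤ l → (γ (n-l) : ℝ) ≤ Λ (n-l+1) - n/2 + (n-l : ℕ)
          ∧ Λ (n-l+3) - n/2 + (n-l : ℕ) + 1 ≤ γ (n-l))
     ∧ (∀ p : ℕ, (n : ℤ) - l + 1 ≤ (p : ℤ) → (p : ℤ) ≤ (n : ℤ) - 2 →
          (γ p : ℝ) ≤ Λ (p+2) - n/2 + p ∧ Λ (p+3) - n/2 + p + 1 ≤ γ p)}

/-- The set `Box_{i,j} ⊆ ℤ^n` of Kraljević `K`-type parameters (coordinates `λ_1,…,λ_n`,
modelled as functions `ℕ → ℤ` constrained on indices `1,…,n`):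
`Λ_{p−1}−n/2+p−1 ≥ λ_p ≥ Λ_p−n/2+p` for `1 ≤ p ≤ i`;
`Λ_p−n/2+p−1 ≥ λ_p ≥ Λ_{p+1}−n/2+p` for `i+1 ≤ p ≤ n−j+1`;
`Λ_{p+1}−n/2+p−1 ≥ λ_p ≥ Λ_{p+2}−n/2+p` for `n−j+2 ≤ p ≤ n`;
with the conventions `Λ_0 = +∞`, `Λ_{n+2} = −∞` (the corresponding bound is omitted). -/
def Box (n : ℕ) (Λ : ℕ → ℝ) (i j : ℕ) : Set (ℕ → ℤ) :=
  {lam | (∀ p : ℕ, 1 ≤ p → p ≤ i →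
            (2 ≤ p → (lam p : ℝ) ≤ Λ (p-1) - n/2 + p - 1) ∧ Λ p - n/2 + p ≤ lam p)
       ∧ (∀ p : ℕ, i + 1 ≤ p → (p : ℤ) ≤ (n : ℤ) - j + 1 →
            (lam p : ℝ) ≤ Λ p - n/2 + p - 1 ∧ Λ (p+1) - n/2 + p ≤ lam p)
       ∧ (∀ p : ℕ, (n : ℤ) - j + 2 ≤ (p : ℤ) → p ≤ n →
            (lam p : ℝ) ≤ Λ (p+1) - n/2 + p - 1
              ∧ ((p : ℤ) ≤ (n : ℤ) - 1 → Λ (p+2) - n/2 + p ≤ lam p))}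


private lemma Sset_auxA (n : ℕ) (hn : 2 ≤ n) (Λ : ℕ → ℝ)
    (hdec : ∀ p : ℕ, 1 ≤ p → p ≤ n → Λ (p+1) < Λ p)
    (i j i' j' : ℕ) (hi1 : 1 ≤ i) (hj1 : 2 ≤ j) (hj2 : i + j ≤ n+1)
    (hi'2 : i' ≤ n-1) (hlt : i < i')
    (γ : ℕ → ℤ) (hS : γ ∈ Sset n Λ i j) (hS' : γ ∈ Sset n Λ i' j') : False := by
  obtain ⟨h1, h2, h3⟩ := hS
  obtain ⟨h1', h2', h3'⟩ := hS'
  obtain ⟨_, hlo⟩ := h1' i hi1 hlt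
  by_cases hc : (i : ℤ) ≤ (n : ℤ) - j
  · obtain ⟨hup, _⟩ := h2 i le_rfl hc
    linarith
  · have hub : (n : ℤ) - j + 1 ≤ (i : ℤ) := by omega
    have hub2 : (i : ℤ) ≤ (n : ℤ) - 2 := by omega
    obtain ⟨hup, _⟩ := h3 i hub hub2
    have hd := hdec (i+1) (by omega) (by omega)
    have he : i + 1 + 1 = i + 2 := by ring
    rw [he] at hd
    linarith

private lemma Sset_auxB (n : ℕ) (hn : 2 ≤ n) (Λ : ℕ → ℝ) (i j j' : ℕ)
    (hi1 : 1 ≤ i) (hj1 : 2 ≤ j) (hj'2 : i + j' ≤ n+1) (hlt : j < j')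
    (γ : ℕ → ℤ) (hS : γ ∈ Sset n Λ i j) (hS' : γ ∈ Sset n Λ i j') : False := by
  obtain ⟨h1, h2, h3⟩ := hS
  obtain ⟨h1', h2', h3'⟩ := hS'
  set p : ℕ := n + 1 - j' with hpdef
  have hp : (p : ℤ) = (n : ℤ) + 1 - (j' : ℤ) := by omega
  obtain ⟨hup, _⟩ := h3' p (by omega) (by omega)
  obtain ⟨_, hlo⟩ := h2 p (by omega) (by omega)
  linarith

/-- Let `n ≥ 2` and let `Λ_1 > ⋯ > Λ_{n+1}` be a regular integral
infinitesimal character (`Λ_p − n/2 ∈ ℤ`).  For any two distinct pairs `(i,j)` and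
`(i',j')` with `1 ≤ i, i' ≤ n−1`, `2 ≤ j ≤ n+1−i`, `2 ≤ j' ≤ n+1−i'`, the sets
`S_{i,j}` and `S_{i',j'}` are disjoint. -/
theorem Sset_disjoint (n : ℕ) (hn : 2 ≤ n) (Λ : ℕ → ℝ)
    (hdec : ∀ p : ℕ, 1 ≤ p → p ≤ n → Λ (p+1) < Λ p)
    (hint : ∀ p : ℕ, 1 ≤ p → p ≤ n+1 → ∃ m : ℤ, Λ p = m + n/2)
    (i j i' j' : ℕ)
    (hi1 : 1 ≤ i) (hi2 : i ≤ n-1) (hj1 : 2 ≤ j) (hj2 : i + j ≤ n+1)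
    (hi'1 : 1 ≤ i') (hi'2 : i' ≤ n-1) (hj'1 : 2 ≤ j') (hj'2 : i' + j' ≤ n+1)
    (hne : (i, j) ≠ (i', j')) :
    Sset n Λ i j ∩ Sset n Λ i' j' = ∅ := by
  ext γ
  simp only [Set.mem_inter_iff, Set.mem_empty_iff_false, iff_false, not_and]
  intro hS hS'
  rcases lt_trichotomy i i' with h | h | h
  · exact Sset_auxA n hn Λ hdec i j i' j' hi1 hj1 hj2 hi'2 h γ hS hS'
  · subst h
    have hjne : j ≠ j' := fun hh => hne (by rw [hh])
    rcases lt_trichotomy j j' with hj | hj | hj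
    · exact Sset_auxB n hn Λ i j j' hi1 hj1 hj'2 hj γ hS hS'
    · exact hjne hj
    · exact Sset_auxB n hn Λ i j' j hi'1 hj'1 hj2 hj γ hS' hS
  · exact Sset_auxA n hn Λ hdec i' j' i j hi'1 hj'1 hj'2 hi2 h γ hS' hS
end

section
/- Let 1 ≤ i ≤ n−1 and 2 ≤ j with i+j ≤ n−1. Then a vector γ ∈ ℤ^{n−2} lies in all four sets B_{i,j}, B_{i,j−1}, B_{i−1,j} and B_{i−1,j−1} if and only if γ ∈ S_{i,j}; that is, B_{i,j} ∩ B_{i,j−1} ∩ B_{i−1,j} ∩ B_{i−1,j−1} = S_{i,j}. -/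
/-- Let `n ≥ 2`, let `Λ_1 > ⋯ > Λ_{n+1}` be a regular integral
infinitesimal character, and let `1 ≤ i ≤ n−1`, `2 ≤ j`, `i+j ≤ n−1`.  Then
`B_{i,j} ∩ B_{i,j−1} ∩ B_{i−1,j} ∩ B_{i−1,j−1} = S_{i,j}`. -/
theorem Bset_inter_eq_Sset (n : ℕ) (hn : 2 ≤ n) (Λ : ℕ → ℝ)
    (hdec : ∀ p : ℕ, 1 ≤ p → p ≤ n → Λ (p+1) < Λ p)
    (hint : ∀ p : ℕ, 1 ≤ p → p ≤ n+1 → ∃ m : ℤ, Λ p = m + n/2)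
    (i j : ℕ) (hi1 : 1 ≤ i) (hi2 : i ≤ n-1) (hj1 : 2 ≤ j) (hij : i + j ≤ n-1) :
    Bset n Λ i j ∩ Bset n Λ i (j-1) ∩ Bset n Λ (i-1) j ∩ Bset n Λ (i-1) (j-1)
      = Sset n Λ i j := by
  ext γ
  simp only [Set.mem_inter_iff, Sset, Bset, Set.mem_setOf_eq]
  constructor
  · rintro ⟨⟨⟨hA, _⟩, _⟩, hD⟩
    exact ⟨fun p hp1 hp2 => hA.1 p hp1 hp2,
      fun p hp1 hp2 => hD.2.2.1 p (by omega) (by omega),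
      fun p hp1 hp2 => hA.2.2.2.2 p hp1 hp2⟩
  · rintro ⟨h1, h2, h3⟩
    have hd1 : Λ (i+1) < Λ i := hdec i hi1 (by omega)
    have hd2 : Λ (n-j+3) < Λ (n-j+2) := by
      have h := hdec (n-j+2) (by omega) (by omega)
      rwa [show n-j+2+1 = n-j+3 by omega] at h
    have hsi := h2 i le_rfl (by omega)
    have hsn := h2 (n-j) (by omega) (by omega)
    have c2i : 1 ≤ i → (γ i : ℝ) ≤ Λ i - n/2 + i ∧ Λ (i+2) - n/2 + i + 1 ≤ γ i :=
      fun _ => ⟨by linarith [hsi.1], hsi.2⟩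
    have c4j : 2 ≤ j → (γ (n-j) : ℝ) ≤ Λ (n-j+1) - n/2 + (n-j : ℕ)
        ∧ Λ (n-j+3) - n/2 + (n-j : ℕ) + 1 ≤ γ (n-j) :=
      fun _ => ⟨hsn.1, by linarith [hsn.2]⟩
    have c2i' : 1 ≤ i-1 → (γ (i-1) : ℝ) ≤ Λ (i-1) - n/2 + (i-1 : ℕ)
        ∧ Λ (i-1+2) - n/2 + (i-1 : ℕ) + 1 ≤ γ (i-1) := by
      intro hk
      have hs := h1 (i-1) (by omega) (by omega)
      rw [show (i-1)+1 = i by omega] at hs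
      rw [show i-1+2 = i+1 by omega]
      exact ⟨hs.1, by linarith [hs.2]⟩
    have c4j' : 2 ≤ j-1 → (γ (n-(j-1)) : ℝ) ≤ Λ (n-(j-1)+1) - n/2 + (n-(j-1) : ℕ)
        ∧ Λ (n-(j-1)+3) - n/2 + (n-(j-1) : ℕ) + 1 ≤ γ (n-(j-1)) := by
      intro hl
      have hs := h3 (n-j+1) (by omega) (by omega)
      rw [show n-j+1+2 = n-j+3 by omega, show n-j+1+3 = n-j+4 by omega] at hs
      rw [show n-(j-1) = n-j+1 by omega, show n-j+1+1 = n-j+2 by omega,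
        show n-j+1+3 = n-j+4 by omega]
      exact ⟨by linarith [hs.1], hs.2⟩
    refine ⟨⟨⟨⟨h1, c2i, fun p hp1 hp2 => h2 p (by omega) (by omega), c4j, h3⟩,
      h1, c2i, fun p hp1 hp2 => h2 p (by omega) (by omega), c4j',
        fun p hp1 hp2 => h3 p (by omega) hp2⟩,
      fun p hp1 hp2 => h1 p hp1 (by omega), c2i',
        fun p hp1 hp2 => h2 p (by omega) (by omega), c4j, h3⟩,
      fun p hp1 hp2 => h1 p hp1 (by omega), c2i',
        fun p hp1 hp2 => h2 p (by omega) (by omega), c4j',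
        fun p hp1 hp2 => h3 p (by omega) hp2⟩
end
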